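/- arXiv:math/9806163 — 5 statements merged into one kernel-verified Lean document; each statement's English description precedes it below -/
import Mathlib

section
/- Let n, f ≥ 1. The map which sends the generator t of the braid group B_n(B) of type B to Δ_f^{-2}Δ_{f+1}^2 and sends the generator σ_i to σ̃_{f+i} for i = 1, …, n−1 extends to a well-defined group homomorphism ρ̃_{f,n} : B_n(B) → B_{f+n}(A). -/
/-- Defining relations of the braid group of type `A` on `k` strands, with generators
`σ̃_1, …, σ̃_{k-1}` indexed by `Fin (k-1)` (index `i` corresponds to `σ̃_{i+1}`):
commuting relations for far-apart generators and the braid relations for adjacent ones. -/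
def braidRelsA (k : ℕ) : Set (FreeGroup (Fin (k - 1))) :=
  {r | ∃ i j : Fin (k - 1),
        ((i : ℕ) + 2 ≤ (j : ℕ) ∧
          r = .of i * .of j * (.of i)⁻¹ * (.of j)⁻¹) ∨
        ((j : ℕ) = (i : ℕ) + 1 ∧
          r = .of i * .of j * .of i * (.of j * .of i * .of j)⁻¹)}

/-- The braid group of type `A` on `k` strands. -/
abbrev BraidA (k : ℕ) := PresentedGroup (braidRelsA k)

/-- The generator `σ̃_i` (1-based, `1 ≤ i ≤ k-1`) of the braid group of type `A`
on `k` strands; defined to be `1` for out-of-range indices. -/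
def sigmaA (k i : ℕ) : BraidA k :=
  if h : i - 1 < k - 1 then PresentedGroup.of ⟨i - 1, h⟩ else 1

/-- The full twist `Δ_f^2 = (σ̃_{f-1} ⋯ σ̃_1)^f` in the braid group of type `A`
on `k` strands (for `f ≤ k`); `Δ_1^2 = 1`. -/
def fullTwistA (k f : ℕ) : BraidA k :=
  (((List.range (f - 1)).map (fun j => sigmaA k (f - 1 - j))).prod) ^ f

/-- Defining relations of the braid group of type `B` on `n` strands, with generators
`t` (encoded as `none`) and `σ_1, …, σ_{n-1}` (with `σ_{i+1}` encoded as `some i`):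
the braid and commuting relations among the `σ_i`, together with
`σ_1 t σ_1 t = t σ_1 t σ_1` and `t σ_i = σ_i t` for `i ≥ 2`. -/
def braidRelsB (n : ℕ) : Set (FreeGroup (Option (Fin (n - 1)))) :=
  {r | (∃ i j : Fin (n - 1),
          ((i : ℕ) + 2 ≤ (j : ℕ) ∧
            r = .of (some i) * .of (some j) * (.of (some i))⁻¹ * (.of (some j))⁻¹) ∨
          ((j : ℕ) = (i : ℕ) + 1 ∧
            r = .of (some i) * .of (some j) * .of (some i) *
              (.of (some j) * .of (some i) * .of (some j))⁻¹)) ∨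
       (∃ i : Fin (n - 1), (i : ℕ) = 0 ∧
          r = .of (some i) * .of none * .of (some i) * .of none *
            (.of none * .of (some i) * .of none * .of (some i))⁻¹) ∨
       (∃ i : Fin (n - 1), 1 ≤ (i : ℕ) ∧
          r = .of none * .of (some i) * (.of (some i) * .of none)⁻¹)}

/-- The braid group of type `B` on `n` strands. -/
abbrev BraidB (n : ℕ) := PresentedGroup (braidRelsB n)

/-- The generator `t` of the braid group of type `B`. -/
def tB (n : ℕ) : BraidB n := PresentedGroup.of none

/-- The generator `σ_i` (1-based, `1 ≤ i ≤ n-1`) of the braid group of type `B` on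
`n` strands; defined to be `1` for out-of-range indices. -/
def sigmaB (n i : ℕ) : BraidB n :=
  if h : i - 1 < n - 1 then PresentedGroup.of (some ⟨i - 1, h⟩) else 1

namespace BraidAux

lemma relA_eq_one {k : ℕ} {r : FreeGroup (Fin (k - 1))} (h : r ∈ braidRelsA k) :
    PresentedGroup.mk (braidRelsA k) r = 1 :=
  (QuotientGroup.eq_one_iff _).mpr (Subgroup.subset_normalClosure h)

lemma sigmaA_of {k i : ℕ} (h : i - 1 < k - 1) :
    sigmaA k i = PresentedGroup.of ⟨i - 1, h⟩ := dif_pos h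

lemma commA {k : ℕ} {i j : ℕ} (hi : 1 ≤ i) (hij : i + 2 ≤ j) :
    Commute (sigmaA k i) (sigmaA k j) := by
  by_cases hj : j - 1 < k - 1
  · have hik : i - 1 < k - 1 := by omega
    have hr : (FreeGroup.of (⟨i - 1, hik⟩ : Fin (k - 1)) * .of ⟨j - 1, hj⟩ *
        (.of ⟨i - 1, hik⟩)⁻¹ * (.of ⟨j - 1, hj⟩)⁻¹) ∈ braidRelsA k :=
      ⟨⟨i - 1, hik⟩, ⟨j - 1, hj⟩, Or.inl ⟨by simp; omega, rfl⟩⟩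
    have h1 := relA_eq_one hr
    simp only [map_mul, map_inv] at h1
    rw [sigmaA_of hik, sigmaA_of hj]
    rw [← commutatorElement_eq_one_iff_commute]
    exact h1
  · have h1 : sigmaA k j = 1 := dif_neg hj
    rw [h1]; exact Commute.one_right _

lemma braidA {k : ℕ} {i : ℕ} (hi : 1 ≤ i) (hik : i + 1 ≤ k - 1) :
    sigmaA k i * sigmaA k (i + 1) * sigmaA k i
      = sigmaA k (i + 1) * sigmaA k i * sigmaA k (i + 1) := by
  have h1 : i - 1 < k - 1 := by omega
  have h2 : (i + 1) - 1 < k - 1 := by omega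
  have hr : (FreeGroup.of (⟨i - 1, h1⟩ : Fin (k - 1)) * .of ⟨(i+1) - 1, h2⟩ * .of ⟨i - 1, h1⟩ *
      (.of ⟨(i+1) - 1, h2⟩ * .of ⟨i - 1, h1⟩ * .of ⟨(i+1) - 1, h2⟩)⁻¹) ∈ braidRelsA k :=
    ⟨⟨i - 1, h1⟩, ⟨(i+1) - 1, h2⟩, Or.inr ⟨by simp; omega, rfl⟩⟩
  have hh := relA_eq_one hr
  simp only [map_mul, map_inv] at hh
  rw [mul_inv_eq_one] at hh
  rw [sigmaA_of h1, sigmaA_of h2]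
  exact hh


def desc (k : ℕ) : ℕ → BraidA k
  | 0 => 1
  | m + 1 => sigmaA k (m + 1) * desc k m

def asc (k : ℕ) : ℕ → BraidA k
  | 0 => 1
  | m + 1 => asc k m * sigmaA k (m + 1)

def asc2 (k : ℕ) : ℕ → BraidA k
  | 0 => 1
  | m + 1 => asc2 k m * sigmaA k (m + 2)

lemma commute_sigma_desc {k j : ℕ} : ∀ {m}, m + 2 ≤ j → Commute (sigmaA k j) (desc k m)
  | 0, _ => Commute.one_right _
  | m + 1, h =>
    ((commA (Nat.succ_le_succ (Nat.zero_le m)) h).symm).mul_right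
      (commute_sigma_desc (by omega))

lemma commute_sigma_asc {k j : ℕ} : ∀ {m}, m + 2 ≤ j → Commute (sigmaA k j) (asc k m)
  | 0, _ => Commute.one_right _
  | m + 1, h =>
    (commute_sigma_asc (by omega)).mul_right
      ((commA (Nat.succ_le_succ (Nat.zero_le m)) h).symm)

/-- `desc m · σ_{j+1} = σ_j · desc m` for `1 ≤ j`, `j+1 ≤ m ≤ k-1`. -/
lemma desc_mul_sigma {k : ℕ} : ∀ {m j : ℕ}, 1 ≤ j → j + 1 ≤ m → m ≤ k - 1 →
    desc k m * sigmaA k (j + 1) = sigmaA k j * desc k m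
  | 0, j, _, hj, _ => by omega
  | m + 1, j, h1, hj, hm => by
    rcases Nat.lt_or_ge (j + 1) (m + 1) with hlt | hge
    · -- j + 1 ≤ m
      show sigmaA k (m + 1) * desc k m * sigmaA k (j + 1) = _
      rw [mul_assoc, desc_mul_sigma h1 (by omega) (by omega), ← mul_assoc,
        ((commA (by omega) (by omega : j + 2 ≤ m + 1)).symm).eq, mul_assoc]
      rfl
    · -- j = m
      have hjm : j = m := by omega
      subst hjm
      obtain ⟨m', rfl⟩ : ∃ m', j = m' + 1 := ⟨j - 1, by omega⟩
      show sigmaA k (m' + 2) * (sigmaA k (m' + 1) * desc k m') * sigmaA k (m' + 2) = _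
      rw [mul_assoc, mul_assoc, ((commute_sigma_desc (le_refl _)).symm).eq, ← mul_assoc,
        ← mul_assoc, ← braidA (by omega : 1 ≤ m' + 1) (by omega)]
      simp only [desc, mul_assoc]

lemma sigma_mul_desc {k m j : ℕ} (h1 : 1 ≤ j) (hj : j + 1 ≤ m) (hm : m ≤ k - 1) :
    sigmaA k j * desc k m = desc k m * sigmaA k (j + 1) :=
  (desc_mul_sigma h1 hj hm).symm

/-- `desc f · desc (r+1) = desc r · desc f · σ_1` for `r + 2 ≤ f ≤ k-1`. -/
lemma desc_mul_desc {k f : ℕ} : ∀ {r : ℕ}, r + 2 ≤ f → f ≤ k - 1 →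
    desc k f * desc k (r + 1) = desc k r * desc k f * sigmaA k 1
  | 0, hr, hf => by
    show desc k f * (sigmaA k 1 * 1) = 1 * desc k f * sigmaA k 1
    rw [mul_one, one_mul]
  | r + 1, hr, hf => by
    show desc k f * (sigmaA k (r + 2) * desc k (r + 1)) = _
    rw [← mul_assoc, desc_mul_sigma (by omega) (by omega) hf, mul_assoc,
      desc_mul_desc (by omega) hf, ← mul_assoc, ← mul_assoc]
    rfl

/-- `desc f · desc f = desc (f-1) · desc f · σ_1` for `2 ≤ f ≤ k - 1`. -/
lemma desc_sq {k f : ℕ} (h2 : 2 ≤ f) (hf : f ≤ k - 1) :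
    desc k f * desc k f = desc k (f - 1) * desc k f * sigmaA k 1 := by
  obtain ⟨f', rfl⟩ : ∃ f', f = f' + 2 := ⟨f - 2, by omega⟩
  rw [show f' + 2 - 1 = f' + 1 from rfl]
  nth_rewrite 2 [show desc k (f' + 2) = sigmaA k (f' + 2) * desc k (f' + 1) from rfl]
  rw [← mul_assoc, desc_mul_sigma (by omega) (by omega) hf, mul_assoc,
    desc_mul_desc (by omega) hf]
  show _ = (sigmaA k (f' + 1) * desc k f') * desc k (f' + 2) * sigmaA k 1
  simp only [mul_assoc]

lemma sigma1_mul_asc2 {k : ℕ} : ∀ m, sigmaA k 1 * asc2 k m = asc k (m + 1)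
  | 0 => by
    show sigmaA k 1 * 1 = 1 * sigmaA k 1
    rw [mul_one, one_mul]
  | m + 1 => by
    show sigmaA k 1 * (asc2 k m * sigmaA k (m + 2)) = asc k (m + 1) * sigmaA k (m + 2)
    rw [← mul_assoc, sigma1_mul_asc2 m]

lemma asc_mul_desc {k f : ℕ} : ∀ {m}, m + 1 ≤ f → f ≤ k - 1 →
    asc k m * desc k f = desc k f * asc2 k m
  | 0, _, _ => by
    show 1 * desc k f = desc k f * 1
    rw [mul_one, one_mul]
  | m + 1, hm, hf => by
    show asc k m * sigmaA k (m + 1) * desc k f = desc k f * (asc2 k m * sigmaA k (m + 2))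
    rw [mul_assoc, sigma_mul_desc (by omega) (by omega) hf, ← mul_assoc,
      asc_mul_desc (by omega) hf, mul_assoc]

lemma pow_desc {k f : ℕ} (hf : 1 ≤ f) (hfk : f ≤ k - 1) :
    ∀ m, m ≤ f → (desc k f) ^ (m + 1) = (desc k (f - 1)) ^ m * desc k f * asc k m := by
  intro m
  induction m with
  | zero => intro _; simp [asc]
  | succ m ih =>
    intro hm
    have step : desc k f * (asc k m * desc k f)
        = desc k (f - 1) * (desc k f * asc k (m + 1)) := by
      rw [asc_mul_desc (by omega) hfk]
      rcases Nat.lt_or_ge f 2 with hf1 | hf2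
      · -- f = 1, m = 0
        have hf1 : f = 1 := by omega
        have hm0 : m = 0 := by omega
        subst hf1; subst hm0
        simp [desc, asc, asc2]
      · rw [← mul_assoc, desc_sq hf2 hfk]
        simp only [mul_assoc]
        rw [sigma1_mul_asc2]
    calc (desc k f) ^ (m + 1 + 1)
        = (desc k (f - 1)) ^ m * desc k f * asc k m * desc k f := by
          rw [pow_succ, ih (by omega)]
      _ = (desc k (f - 1)) ^ m * (desc k f * (asc k m * desc k f)) := by
          simp only [mul_assoc]
      _ = (desc k (f - 1)) ^ m * (desc k (f - 1) * (desc k f * asc k (m + 1))) := by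
          rw [step]
      _ = (desc k (f - 1)) ^ (m + 1) * desc k f * asc k (m + 1) := by
          rw [pow_succ]; simp only [mul_assoc]

def tau (k m : ℕ) : BraidA k := desc k m * asc k m

lemma tau_succ {k m : ℕ} :
    tau k (m + 1) = sigmaA k (m + 1) * tau k m * sigmaA k (m + 1) := by
  show sigmaA k (m + 1) * desc k m * (asc k m * sigmaA k (m + 1)) = _
  simp only [tau, mul_assoc]

lemma commute_sigma_tau {k j m : ℕ} (h : m + 2 ≤ j) : Commute (sigmaA k j) (tau k m) :=
  (commute_sigma_desc h).mul_right (commute_sigma_asc h)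

lemma fullTwistA_eq_one : True := trivial


lemma braid_step {G : Type*} [Group G] (a b t : G)
    (hB : a * b * a = b * a * b) (hC : b * t = t * b)
    (hIH : a * t * a * t = t * a * t * a) :
    b * (a * t * a) * b * (a * t * a) = a * t * a * b * (a * t * a) * b := by
  have hB' : ∀ x : G, a * (b * (a * x)) = b * (a * (b * x)) := by
    intro x; rw [← mul_assoc, ← mul_assoc, hB]; simp only [mul_assoc]
  have hB'' : a * (b * a) = b * (a * b) := by
    rw [← mul_assoc, hB, mul_assoc]
  have hC' : ∀ x : G, b * (t * x) = t * (b * x) := by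
    intro x; rw [← mul_assoc, hC, mul_assoc]
  have hIH' : ∀ x : G, a * (t * (a * (t * x))) = t * (a * (t * (a * x))) := by
    intro x; rw [← mul_assoc, ← mul_assoc, ← mul_assoc, hIH]; simp only [mul_assoc]
  simp only [mul_assoc]
  -- LHS: b * (a * (t * (a * (b * (a * (t * a))))))
  -- RHS: a * (t * (a * (b * (a * (t * (a * b))))))
  conv_lhs => rw [hB' (t * a)]
  conv_lhs => rw [← hC' (a * (b * (t * a)))]
  conv_lhs => rw [hC' a]
  conv_lhs => rw [← hB' (t * (a * (t * (b * a))))]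
  conv_lhs => rw [hIH' (b * a)]
  conv_lhs => rw [hC' (a * (t * (a * (b * a))))]
  conv_rhs => rw [hB' (t * (a * b))]
  conv_rhs => rw [hC' (a * b)]
  conv_lhs => rw [hB'']

lemma tbraid {k : ℕ} : ∀ m, m + 1 ≤ k - 1 →
    sigmaA k (m + 1) * tau k m * sigmaA k (m + 1) * tau k m
      = tau k m * sigmaA k (m + 1) * tau k m * sigmaA k (m + 1) := by
  intro m
  induction m with
  | zero =>
    intro _
    show sigmaA k 1 * (1 * 1) * sigmaA k 1 * (1 * 1) = (1 * 1) * sigmaA k 1 * (1 * 1) * sigmaA k 1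
    group
  | succ m ih =>
    intro hm
    rw [tau_succ]
    exact braid_step (sigmaA k (m + 1)) (sigmaA k (m + 2)) (tau k m)
      (braidA (by omega) (by omega)) ((commute_sigma_tau (by omega)).eq)
      (ih (by omega))

lemma desc_eq_prod {k : ℕ} : ∀ m, ((List.range m).map (fun j => sigmaA k (m - j))).prod = desc k m
  | 0 => by simp [desc]
  | m + 1 => by
    rw [List.range_succ_eq_map]
    simp only [List.map_cons, List.map_map, List.prod_cons, Nat.sub_zero]
    have he : ((fun j => sigmaA k (m + 1 - j)) ∘ Nat.succ) = fun j => sigmaA k (m - j) := by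
      funext j
      simp only [Function.comp_apply]
      congr 1
      omega
    rw [he, desc_eq_prod m]
    rfl

lemma fullTwistA_eq {k f : ℕ} : fullTwistA k f = (desc k (f - 1)) ^ f := by
  rw [fullTwistA, desc_eq_prod]

lemma fullTwist_key {k f : ℕ} (hf : 1 ≤ f) (hfk : f ≤ k - 1) :
    (fullTwistA k f)⁻¹ * fullTwistA k (f + 1) = tau k f := by
  rw [fullTwistA_eq, fullTwistA_eq, show f + 1 - 1 = f from rfl,
    pow_desc hf hfk f (le_refl f), tau]
  simp only [mul_assoc, inv_mul_cancel_left]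


end BraidAux

open BraidAux

/-- Let `n, f ≥ 1`. The map sending the generator `t` of the braid
group `B_n(B)` of type `B` to `Δ_f^{-2} Δ_{f+1}^2` and the generator `σ_i` to
`σ̃_{f+i}` for `i = 1, …, n−1` extends to a well-defined group homomorphism
`ρ̃_{f,n} : B_n(B) → B_{f+n}(A)`. -/
theorem exists_braidB_to_braidA_hom (n f : ℕ) (hn : 1 ≤ n) (hf : 1 ≤ f) :
    ∃ ρ : BraidB n →* BraidA (f + n),
      ρ (tB n) = (fullTwistA (f + n) f)⁻¹ * fullTwistA (f + n) (f + 1) ∧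
      ∀ i : ℕ, 1 ≤ i → i ≤ n - 1 → ρ (sigmaB n i) = sigmaA (f + n) (f + i) := by
  set K := f + n with hK
  have hfK : f ≤ K - 1 := by omega
  set T : BraidA K := (fullTwistA K f)⁻¹ * fullTwistA K (f + 1) with hT
  have hTtau : T = tau K f := fullTwist_key hf hfK
  set φ : Option (Fin (n - 1)) → BraidA K :=
    fun o => o.elim T (fun i => sigmaA K (f + (i : ℕ) + 1)) with hφ
  have hrel : ∀ r ∈ braidRelsB n, FreeGroup.lift φ r = 1 := by
    rintro r (⟨i, j, ⟨hij, rfl⟩ | ⟨hij, rfl⟩⟩ | ⟨i, hi, rfl⟩ | ⟨i, hi, rfl⟩)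
    · -- commuting σ's
      simp only [map_mul, map_inv, FreeGroup.lift_apply_of, hφ, Option.elim_some]
      rw [← commutatorElement_def, commutatorElement_eq_one_iff_commute]
      exact commA (by omega) (by omega)
    · -- braid relation among σ's
      simp only [map_mul, map_inv, FreeGroup.lift_apply_of, hφ, Option.elim_some]
      rw [mul_inv_eq_one]
      have hj' : (j : ℕ) < n - 1 := j.isLt
      rw [show f + (j : ℕ) + 1 = (f + (i : ℕ) + 1) + 1 by omega]
      exact braidA (by omega) (by omega)
    · -- σ_1 t σ_1 t = t σ_1 t σ_1
      have hn2 : (i : ℕ) < n - 1 := i.isLt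
      simp only [map_mul, map_inv, FreeGroup.lift_apply_of, hφ, Option.elim_some, Option.elim_none]
      rw [mul_inv_eq_one, hi, hTtau]
      exact tbraid f (by omega)
    · -- t commutes with σ_i, i ≥ 2
      simp only [map_mul, map_inv, FreeGroup.lift_apply_of, hφ, Option.elim_some, Option.elim_none]
      rw [mul_inv_eq_one]
      have hc : Commute (sigmaA K (f + (i : ℕ) + 1)) T := by
        rw [hT, fullTwistA_eq, fullTwistA_eq]
        exact (((commute_sigma_desc (by omega)).pow_right f).inv_right).mul_right
          ((commute_sigma_desc (by omega)).pow_right (f + 1))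
      exact hc.symm.eq
  refine ⟨PresentedGroup.toGroup hrel, ?_, ?_⟩
  · exact PresentedGroup.toGroup.of hrel
  · intro i hi1 hi2
    have h : i - 1 < n - 1 := by omega
    rw [sigmaB, dif_pos h]
    have := PresentedGroup.toGroup.of hrel (x := some ⟨i - 1, h⟩)
    rw [this]
    simp only [hφ, Option.elim_some]
    congr 1
    omega
end

section
/- For every f ≥ 1, in the braid group B_{f+2}(A) the element T = Δ_f^{-2} Δ_{f+1}^2 satisfies the type-B braid relation with σ̃_{f+1}, namely σ̃_{f+1} T σ̃_{f+1} T = T σ̃_{f+1} T σ̃_{f+1}. -/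
namespace BraidAux

lemma rel_eq_one {k : ℕ} {r : FreeGroup (Fin (k-1))} (h : r ∈ braidRelsA k) :
    PresentedGroup.mk (braidRelsA k) r = 1 :=
  (QuotientGroup.eq_one_iff r).2 (Subgroup.subset_normalClosure h)

lemma sigmaA_def {k i : ℕ} (h : i - 1 < k - 1) :
    sigmaA k i = PresentedGroup.mk (braidRelsA k) (FreeGroup.of ⟨i - 1, h⟩) := dif_pos h

lemma comm_rel {k : ℕ} {i j : ℕ} (h1 : 1 ≤ i) (h2 : i + 2 ≤ j) (h3 : j ≤ k - 1) :
    sigmaA k i * sigmaA k j = sigmaA k j * sigmaA k i := by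
  have hi : i - 1 < k - 1 := by omega
  have hj : j - 1 < k - 1 := by omega
  have hmem : (FreeGroup.of ⟨i-1, hi⟩ * FreeGroup.of ⟨j-1, hj⟩ * (FreeGroup.of ⟨i-1, hi⟩)⁻¹ *
      (FreeGroup.of ⟨j-1, hj⟩)⁻¹ : FreeGroup (Fin (k-1))) ∈ braidRelsA k :=
    ⟨⟨i-1, hi⟩, ⟨j-1, hj⟩, Or.inl ⟨show i - 1 + 2 ≤ j - 1 by omega, rfl⟩⟩
  have h1' := rel_eq_one hmem
  simp only [map_mul, map_inv] at h1'
  rw [sigmaA_def hi, sigmaA_def hj]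
  rw [mul_inv_eq_one, mul_inv_eq_iff_eq_mul] at h1'
  exact h1'

lemma braid_rel {k : ℕ} {i : ℕ} (h1 : 1 ≤ i) (h2 : i + 1 ≤ k - 1) :
    sigmaA k i * sigmaA k (i+1) * sigmaA k i = sigmaA k (i+1) * sigmaA k i * sigmaA k (i+1) := by
  have hi : i - 1 < k - 1 := by omega
  have hj : (i+1) - 1 < k - 1 := by omega
  have hmem : (FreeGroup.of ⟨i-1, hi⟩ * FreeGroup.of ⟨i+1-1, hj⟩ * FreeGroup.of ⟨i-1, hi⟩ *
      (FreeGroup.of ⟨i+1-1, hj⟩ * FreeGroup.of ⟨i-1, hi⟩ * FreeGroup.of ⟨i+1-1, hj⟩)⁻¹ :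
      FreeGroup (Fin (k-1))) ∈ braidRelsA k :=
    ⟨⟨i-1, hi⟩, ⟨i+1-1, hj⟩, Or.inr ⟨show i + 1 - 1 = i - 1 + 1 by omega, rfl⟩⟩
  have h1' := rel_eq_one hmem
  simp only [map_mul, map_inv] at h1'
  rw [sigmaA_def hi, sigmaA_def hj]
  rw [mul_inv_eq_one] at h1'
  exact h1'

/-- generic helpers for right-associated rewriting -/
lemma swap_cons {G : Type*} [Group G] {p q q' p' : G} (h : p * q = q' * p') (x : G) :
    p * (q * x) = q' * (p' * x) := by rw [← mul_assoc, h, mul_assoc]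

lemma swap3_cons {G : Type*} [Group G] {a b c a' b' c' : G} (h : a*b*c = a'*b'*c') (x : G) :
    a*(b*(c*x)) = a'*(b'*(c'*x)) := by
  rw [← mul_assoc, ← mul_assoc, h, mul_assoc, mul_assoc]

lemma swap4_cons {G : Type*} [Group G] {a b c d a' b' c' d' : G} (h : a*b*c*d = a'*b'*c'*d')
    (x : G) : a*(b*(c*(d*x))) = a'*(b'*(c'*(d'*x))) := by
  rw [← mul_assoc, ← mul_assoc, ← mul_assoc, h, mul_assoc, mul_assoc, mul_assoc]

/-- `pw k m = σ_m σ_{m-1} ⋯ σ_1` -/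
def pw (k : ℕ) : ℕ → BraidA k
  | 0 => 1
  | m+1 => sigmaA k (m+1) * pw k m

/-- `seg k a n = σ_a σ_{a+1} ⋯ σ_{a+n-1}` -/
def seg (k : ℕ) : ℕ → ℕ → BraidA k
  | _, 0 => 1
  | a, n+1 => sigmaA k a * seg k (a+1) n

/-- `AAw k m = π_1 π_2 ⋯ π_m` (the Garside half twist `Δ_{m+1}`) -/
def AAw (k : ℕ) : ℕ → BraidA k
  | 0 => 1
  | m+1 => AAw k m * pw k (m+1)

/-- the band generator `a_m = σ_m ⋯ σ_1 σ_1 ⋯ σ_m` -/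
def aw (k m : ℕ) : BraidA k := pw k m * seg k 1 m

lemma seg_append (k : ℕ) : ∀ (n a : ℕ), seg k a (n+1) = seg k a n * sigmaA k (a+n)
  | 0, a => by simp [seg]
  | n+1, a => by
    rw [show seg k a (n+1+1) = sigmaA k a * seg k (a+1) (n+1) from rfl, seg_append k n (a+1),
      show seg k a (n+1) = sigmaA k a * seg k (a+1) n from rfl, mul_assoc,
      show a+1+n = a+(n+1) by omega]

lemma comm_pw (k : ℕ) : ∀ (m : ℕ) {j : ℕ}, m + 2 ≤ j → j ≤ k - 1 →
    sigmaA k j * pw k m = pw k m * sigmaA k j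
  | 0, j, _, _ => by simp [pw]
  | m+1, j, h2, h3 => by
    calc sigmaA k j * (sigmaA k (m+1) * pw k m)
        = (sigmaA k j * sigmaA k (m+1)) * pw k m := (mul_assoc _ _ _).symm
      _ = (sigmaA k (m+1) * sigmaA k j) * pw k m := by
          rw [← comm_rel (by omega) (by omega) h3]
      _ = sigmaA k (m+1) * (sigmaA k j * pw k m) := mul_assoc _ _ _
      _ = sigmaA k (m+1) * (pw k m * sigmaA k j) := by rw [comm_pw k m (by omega) h3]
      _ = (sigmaA k (m+1) * pw k m) * sigmaA k j := (mul_assoc _ _ _).symm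

lemma comm_seg (k : ℕ) : ∀ (n a : ℕ) {j : ℕ}, 1 ≤ a → a + n + 1 ≤ j → j ≤ k - 1 →
    sigmaA k j * seg k a n = seg k a n * sigmaA k j
  | 0, a, j, _, _, _ => by simp [seg]
  | n+1, a, j, h1, h2, h3 => by
    calc sigmaA k j * (sigmaA k a * seg k (a+1) n)
        = (sigmaA k j * sigmaA k a) * seg k (a+1) n := (mul_assoc _ _ _).symm
      _ = (sigmaA k a * sigmaA k j) * seg k (a+1) n := by
          rw [← comm_rel h1 (by omega) h3]
      _ = sigmaA k a * (sigmaA k j * seg k (a+1) n) := mul_assoc _ _ _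
      _ = sigmaA k a * (seg k (a+1) n * sigmaA k j) := by
          rw [comm_seg k n (a+1) (by omega) (by omega) h3]
      _ = (sigmaA k a * seg k (a+1) n) * sigmaA k j := (mul_assoc _ _ _).symm

lemma comm_AA (k : ℕ) : ∀ (m : ℕ) {j : ℕ}, m + 2 ≤ j → j ≤ k - 1 →
    sigmaA k j * AAw k m = AAw k m * sigmaA k j
  | 0, j, _, _ => by simp [AAw]
  | m+1, j, h2, h3 => by
    calc sigmaA k j * (AAw k m * pw k (m+1))
        = (sigmaA k j * AAw k m) * pw k (m+1) := (mul_assoc _ _ _).symm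
      _ = (AAw k m * sigmaA k j) * pw k (m+1) := by rw [comm_AA k m (by omega) h3]
      _ = AAw k m * (sigmaA k j * pw k (m+1)) := mul_assoc _ _ _
      _ = AAw k m * (pw k (m+1) * sigmaA k j) := by rw [comm_pw k (m+1) (by omega) h3]
      _ = (AAw k m * pw k (m+1)) * sigmaA k j := (mul_assoc _ _ _).symm

lemma comm_aw (k : ℕ) (m : ℕ) {j : ℕ} (h2 : m + 2 ≤ j) (h3 : j ≤ k - 1) :
    sigmaA k j * aw k m = aw k m * sigmaA k j := by
  unfold aw
  calc sigmaA k j * (pw k m * seg k 1 m)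
      = (sigmaA k j * pw k m) * seg k 1 m := (mul_assoc _ _ _).symm
    _ = (pw k m * sigmaA k j) * seg k 1 m := by rw [comm_pw k m h2 h3]
    _ = pw k m * (sigmaA k j * seg k 1 m) := mul_assoc _ _ _
    _ = pw k m * (seg k 1 m * sigmaA k j) := by
        rw [comm_seg k m 1 (le_refl 1) (by omega) h3]
    _ = (pw k m * seg k 1 m) * sigmaA k j := (mul_assoc _ _ _).symm

lemma shift_pw (k : ℕ) : ∀ (m : ℕ) {j : ℕ}, 2 ≤ j → j ≤ m → m ≤ k - 1 →
    pw k m * sigmaA k j = sigmaA k (j-1) * pw k m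
  | 0, j, h1, h2, _ => by omega
  | m+1, j, h1, h2, h3 => by
    rcases Nat.lt_or_ge j (m+1) with hj | hj
    · -- j ≤ m
      calc (sigmaA k (m+1) * pw k m) * sigmaA k j
          = sigmaA k (m+1) * (pw k m * sigmaA k j) := mul_assoc _ _ _
        _ = sigmaA k (m+1) * (sigmaA k (j-1) * pw k m) := by
            rw [shift_pw k m h1 (by omega) (by omega)]
        _ = (sigmaA k (m+1) * sigmaA k (j-1)) * pw k m := (mul_assoc _ _ _).symm
        _ = (sigmaA k (j-1) * sigmaA k (m+1)) * pw k m := by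
            rw [comm_rel (by omega) (by omega) h3]
        _ = sigmaA k (j-1) * (sigmaA k (m+1) * pw k m) := mul_assoc _ _ _
    · -- j = m+1, and m ≥ 1
      have hjj : j = m + 1 := by omega
      subst hjj
      obtain ⟨n, rfl⟩ : ∃ n, m = n + 1 := ⟨m - 1, by omega⟩
      show (sigmaA k (n+2) * (sigmaA k (n+1) * pw k n)) * sigmaA k (n+2) = _
      calc (sigmaA k (n+2) * (sigmaA k (n+1) * pw k n)) * sigmaA k (n+2)
          = sigmaA k (n+2) * (sigmaA k (n+1) * (pw k n * sigmaA k (n+2))) := by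
            rw [mul_assoc, mul_assoc]
        _ = sigmaA k (n+2) * (sigmaA k (n+1) * (sigmaA k (n+2) * pw k n)) := by
            rw [← comm_pw k n (by omega) h3]
        _ = (sigmaA k (n+2) * sigmaA k (n+1) * sigmaA k (n+2)) * pw k n := by
            rw [mul_assoc, mul_assoc]
        _ = (sigmaA k (n+1) * sigmaA k (n+2) * sigmaA k (n+1)) * pw k n := by
            rw [← braid_rel (by omega) (by omega)]
        _ = sigmaA k (n+1) * (sigmaA k (n+2) * (sigmaA k (n+1) * pw k n)) := by
            rw [mul_assoc, mul_assoc]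
        _ = sigmaA k (n+2-1) * (sigmaA k (n+2) * (sigmaA k (n+1) * pw k n)) := by norm_num

lemma shift_seg (k : ℕ) : ∀ (n a m : ℕ), 2 ≤ a → a + n ≤ m + 1 → m ≤ k - 1 →
    pw k m * seg k a n = seg k (a-1) n * pw k m
  | 0, a, m, _, _, _ => by simp [seg]
  | n+1, a, m, h1, h2, h3 => by
    have e : a - 1 + 1 = a := by omega
    calc pw k m * (sigmaA k a * seg k (a+1) n)
        = (pw k m * sigmaA k a) * seg k (a+1) n := (mul_assoc _ _ _).symm
      _ = (sigmaA k (a-1) * pw k m) * seg k (a+1) n := by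
          rw [shift_pw k m h1 (by omega) h3]
      _ = sigmaA k (a-1) * (pw k m * seg k (a+1) n) := mul_assoc _ _ _
      _ = sigmaA k (a-1) * (seg k a n * pw k m) := by
          have := shift_seg k n (a+1) m (by omega) (by omega) h3
          rw [this, show a + 1 - 1 = a by omega]
      _ = (sigmaA k (a-1) * seg k a n) * pw k m := (mul_assoc _ _ _).symm
      _ = seg k (a-1) (n+1) * pw k m := by
          rw [show seg k (a-1) (n+1) = sigmaA k (a-1) * seg k (a-1+1) n from rfl, e]

lemma S_lem (k : ℕ) : ∀ (m : ℕ), m + 1 ≤ k - 1 →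
    AAw k m * pw k (m+1) = seg k 1 (m+1) * AAw k m
  | 0, _ => by simp [AAw, pw, seg]
  | m+1, h => by
    have IH := S_lem k m (by omega)
    calc AAw k (m+1) * pw k (m+2)
        = (AAw k m * pw k (m+1)) * (sigmaA k (m+2) * pw k (m+1)) := rfl
      _ = (seg k 1 (m+1) * AAw k m) * (sigmaA k (m+2) * pw k (m+1)) := by rw [IH]
      _ = seg k 1 (m+1) * (AAw k m * sigmaA k (m+2)) * pw k (m+1) := by
          rw [mul_assoc, mul_assoc, mul_assoc]
      _ = seg k 1 (m+1) * (sigmaA k (m+2) * AAw k m) * pw k (m+1) := by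
          rw [← comm_AA k m (by omega) h]
      _ = (seg k 1 (m+1) * sigmaA k (1+(m+1))) * (AAw k m * pw k (m+1)) := by
          rw [show (1:ℕ)+(m+1) = m+2 by omega, mul_assoc, mul_assoc, mul_assoc]
      _ = seg k 1 (m+2) * AAw k (m+1) := by
          rw [← seg_append k (m+1) 1]
          rfl

lemma AA_succ_eq (k m : ℕ) (h : m + 1 ≤ k - 1) :
    AAw k (m+1) = seg k 1 (m+1) * AAw k m := by
  rw [show AAw k (m+1) = AAw k m * pw k (m+1) from rfl, S_lem k m h]

lemma pow_pw (k : ℕ) : ∀ (j m : ℕ), 1 ≤ j → j ≤ m → m ≤ k - 1 →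
    pw k m ^ j = seg k (m-j+1) (j-1) * pw k m * pw k (m-1) ^ (j-1)
  | 0, m, h1, _, _ => by omega
  | 1, m, _, _, _ => by simp [seg]
  | j+2, m, _, h2, h3 => by
    have IH := pow_pw k (j+1) m (by omega) (by omega) h3
    have e1 : m - (j+1) + 1 + (j+1) ≤ m + 1 := by omega
    have e2 : 2 ≤ m - (j+1) + 1 := by omega
    calc pw k m ^ (j+2)
        = pw k m * pw k m ^ (j+1) := by rw [pow_succ']
      _ = pw k m * (seg k (m-(j+1)+1) j * pw k m * pw k (m-1) ^ j) := by
          rw [IH]; norm_num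
      _ = (pw k m * seg k (m-(j+1)+1) j) * (pw k m * pw k (m-1) ^ j) := by
          rw [mul_assoc, mul_assoc]
      _ = (seg k (m-(j+1)) j * pw k m) * (pw k m * pw k (m-1) ^ j) := by
          have := shift_seg k j (m-(j+1)+1) m e2 (by omega) h3
          rw [this, show m-(j+1)+1-1 = m-(j+1) by omega]
      _ = seg k (m-(j+1)) j * (pw k m * pw k m) * pw k (m-1) ^ j := by
          rw [mul_assoc, mul_assoc, mul_assoc]
      _ = seg k (m-(j+1)) j * (sigmaA k (m-1) * pw k m * pw k (m-1)) * pw k (m-1) ^ j := by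
          obtain ⟨n, rfl⟩ : ∃ n, m = n + 1 := ⟨m - 1, by omega⟩
          rw [show pw k (n+1) * pw k (n+1) = (pw k (n+1) * sigmaA k (n+1)) * pw k n by
            rw [mul_assoc]; rfl, shift_pw k (n+1) (by omega) (le_refl _) h3]
          norm_num
      _ = (seg k (m-(j+1)) j * sigmaA k (m-(j+1)+j)) * pw k m * (pw k (m-1) * pw k (m-1) ^ j) := by
          rw [show m-(j+1)+j = m-1 by omega]
          simp only [mul_assoc]
      _ = seg k (m-(j+2)+1) (j+1) * pw k m * pw k (m-1) ^ (j+1) := by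
          rw [← seg_append k j (m-(j+1)), ← pow_succ', show m-(j+2)+1 = m-(j+1) by omega]

lemma twist_eq (k : ℕ) : ∀ (m : ℕ), m ≤ k - 1 → pw k m ^ (m+1) = AAw k m ^ 2
  | 0, _ => by simp [pw, AAw]
  | m+1, h => by
    have IH := twist_eq k m (by omega)
    have F := pow_pw k (m+1) (m+1) (by omega) (le_refl _) h
    calc pw k (m+1) ^ (m+2)
        = pw k (m+1) ^ (m+1) * pw k (m+1) := by rw [pow_succ]
      _ = seg k 1 m * pw k (m+1) * pw k m ^ m * pw k (m+1) := by
          rw [F]; norm_num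
      _ = seg k 1 m * (sigmaA k (m+1) * (pw k m * pw k m ^ m)) * pw k (m+1) := by
          rw [show pw k (m+1) = sigmaA k (m+1) * pw k m from rfl]
          simp only [mul_assoc]
      _ = (seg k 1 m * sigmaA k (1+m)) * pw k m ^ (m+1) * pw k (m+1) := by
          rw [show (1:ℕ)+m = m+1 by omega, ← pow_succ']
          simp only [mul_assoc]
      _ = seg k 1 (m+1) * AAw k m ^ 2 * pw k (m+1) := by
          rw [← seg_append k m 1, IH]
      _ = seg k 1 (m+1) * AAw k m * (AAw k m * pw k (m+1)) := by
          rw [sq]; simp only [mul_assoc]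
      _ = seg k 1 (m+1) * AAw k m * (seg k 1 (m+1) * AAw k m) := by
          rw [S_lem k m h]
      _ = AAw k (m+1) ^ 2 := by rw [← AA_succ_eq k m h, sq]

lemma aw_succ (k m : ℕ) : aw k (m+1) = sigmaA k (m+1) * aw k m * sigmaA k (m+1) := by
  unfold aw
  rw [seg_append k m 1, show (1:ℕ)+m = m+1 by omega,
    show pw k (m+1) = sigmaA k (m+1) * pw k m from rfl]
  rw [mul_assoc, mul_assoc, mul_assoc]

lemma comm_aw_low (k : ℕ) : ∀ (m : ℕ) {i : ℕ}, 1 ≤ i → i + 1 ≤ m → m ≤ k - 1 →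
    sigmaA k i * aw k m = aw k m * sigmaA k i
  | 0, i, h1, h2, _ => by omega
  | m+1, i, h1, h2, h3 => by
    rcases Nat.lt_or_ge i m with hi | hi
    · -- i ≤ m - 1, i.e. i + 1 ≤ m
      rw [aw_succ]
      calc sigmaA k i * (sigmaA k (m+1) * aw k m * sigmaA k (m+1))
          = (sigmaA k i * sigmaA k (m+1)) * aw k m * sigmaA k (m+1) := by
            rw [mul_assoc, mul_assoc, mul_assoc]
        _ = (sigmaA k (m+1) * sigmaA k i) * aw k m * sigmaA k (m+1) := by
            rw [comm_rel h1 (by omega) h3]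
        _ = sigmaA k (m+1) * (sigmaA k i * aw k m) * sigmaA k (m+1) := by
            simp only [mul_assoc]
        _ = sigmaA k (m+1) * (aw k m * sigmaA k i) * sigmaA k (m+1) := by
            rw [comm_aw_low k m h1 (by omega) (by omega)]
        _ = sigmaA k (m+1) * aw k m * (sigmaA k i * sigmaA k (m+1)) := by
            rw [mul_assoc, mul_assoc, mul_assoc]
        _ = sigmaA k (m+1) * aw k m * (sigmaA k (m+1) * sigmaA k i) := by
            rw [comm_rel h1 (by omega) h3]
        _ = sigmaA k (m+1) * aw k m * sigmaA k (m+1) * sigmaA k i := by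
            simp only [mul_assoc]
    · -- i = m, m ≥ 1
      have him : i = m := by omega
      subst him
      obtain ⟨n, rfl⟩ : ∃ n, i = n + 1 := ⟨i - 1, by omega⟩
      -- t = σ_{n+1}, u = σ_{n+2}, d = aw n
      have hbraid : sigmaA k (n+1) * sigmaA k (n+2) * sigmaA k (n+1)
          = sigmaA k (n+2) * sigmaA k (n+1) * sigmaA k (n+2) := braid_rel (by omega) (by omega)
      have hcomm : sigmaA k (n+2) * aw k n = aw k n * sigmaA k (n+2) :=
        comm_aw k n (by omega) h3
      rw [aw_succ, aw_succ]
      simp only [mul_assoc]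
      rw [swap3_cons hbraid, swap_cons hcomm,
        show sigmaA k (n+2) * (sigmaA k (n+1) * sigmaA k (n+2))
            = sigmaA k (n+1) * (sigmaA k (n+2) * sigmaA k (n+1)) by
          rw [← mul_assoc, ← mul_assoc, ← hbraid]]

lemma comm_pw_aw (k : ℕ) : ∀ (n : ℕ) {m : ℕ}, n + 1 ≤ m → m ≤ k - 1 →
    pw k n * aw k m = aw k m * pw k n
  | 0, m, _, _ => by simp [pw]
  | n+1, m, h2, h3 => by
    calc (sigmaA k (n+1) * pw k n) * aw k m
        = sigmaA k (n+1) * (pw k n * aw k m) := mul_assoc _ _ _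
      _ = sigmaA k (n+1) * (aw k m * pw k n) := by rw [comm_pw_aw k n (by omega) h3]
      _ = (sigmaA k (n+1) * aw k m) * pw k n := (mul_assoc _ _ _).symm
      _ = (aw k m * sigmaA k (n+1)) * pw k n := by
          rw [comm_aw_low k m (by omega) (by omega) h3]
      _ = aw k m * (sigmaA k (n+1) * pw k n) := mul_assoc _ _ _

lemma comm_AA_aw (k : ℕ) : ∀ (n : ℕ) {m : ℕ}, n + 1 ≤ m → m ≤ k - 1 →
    AAw k n * aw k m = aw k m * AAw k n
  | 0, m, _, _ => by simp [AAw]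
  | n+1, m, h2, h3 => by
    calc (AAw k n * pw k (n+1)) * aw k m
        = AAw k n * (pw k (n+1) * aw k m) := mul_assoc _ _ _
      _ = AAw k n * (aw k m * pw k (n+1)) := by rw [comm_pw_aw k (n+1) (by omega) h3]
      _ = (AAw k n * aw k m) * pw k (n+1) := (mul_assoc _ _ _).symm
      _ = (aw k m * AAw k n) * pw k (n+1) := by rw [comm_AA_aw k n (by omega) h3]
      _ = aw k m * (AAw k n * pw k (n+1)) := mul_assoc _ _ _

lemma AA_sq (k m : ℕ) (h1 : 1 ≤ m) (h2 : m ≤ k - 1) :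
    AAw k m ^ 2 = aw k m * AAw k (m-1) ^ 2 := by
  obtain ⟨n, rfl⟩ : ∃ n, m = n + 1 := ⟨m - 1, by omega⟩
  calc AAw k (n+1) ^ 2
      = (AAw k n * pw k (n+1)) * (seg k 1 (n+1) * AAw k n) := by
        rw [sq]; nth_rewrite 2 [AA_succ_eq k n h2]; rfl
    _ = AAw k n * (pw k (n+1) * seg k 1 (n+1)) * AAw k n := by
        rw [mul_assoc, mul_assoc, mul_assoc]
    _ = AAw k n * aw k (n+1) * AAw k n := rfl
    _ = aw k (n+1) * AAw k n * AAw k n := by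
        rw [comm_AA_aw k n (le_refl _) h2]
    _ = aw k (n+1) * AAw k (n+1-1) ^ 2 := by
        rw [mul_assoc, ← sq]; norm_num

lemma rel_step (k : ℕ) : ∀ (m : ℕ), m + 1 ≤ k - 1 →
    sigmaA k (m+1) * aw k m * sigmaA k (m+1) * aw k m
      = aw k m * sigmaA k (m+1) * aw k m * sigmaA k (m+1)
  | 0, _ => by simp [aw, pw, seg]
  | m+1, h => by
    have hbraid : sigmaA k (m+1) * sigmaA k (m+2) * sigmaA k (m+1)
        = sigmaA k (m+2) * sigmaA k (m+1) * sigmaA k (m+2) := braid_rel (by omega) h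
    have hcomm : sigmaA k (m+2) * aw k m = aw k m * sigmaA k (m+2) :=
      comm_aw k m (le_refl _) h
    have hIH : sigmaA k (m+1) * aw k m * sigmaA k (m+1) * aw k m
        = aw k m * sigmaA k (m+1) * aw k m * sigmaA k (m+1) := rel_step k m (by omega)
    rw [aw_succ]
    simp only [mul_assoc]
    conv_lhs => rw [swap3_cons hbraid, swap_cons hcomm, swap_cons hcomm.symm,
      swap3_cons hbraid.symm, swap4_cons hIH]
    conv_rhs => rw [swap3_cons hbraid, swap_cons hcomm, swap_cons hcomm.symm,
      show sigmaA k (m+2) * (sigmaA k (m+1) * sigmaA k (m+2))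
          = sigmaA k (m+1) * (sigmaA k (m+2) * sigmaA k (m+1)) by
        rw [← mul_assoc, ← mul_assoc, ← hbraid]]

lemma listprod (k : ℕ) : ∀ (n : ℕ),
    ((List.range n).map (fun j => sigmaA k (n - j))).prod = pw k n
  | 0 => by simp [pw]
  | n+1 => by
    rw [List.range_succ_eq_map]
    simp only [List.map_cons, List.map_map, List.prod_cons, Nat.sub_zero]
    have e : (fun j => sigmaA k (n + 1 - j)) ∘ Nat.succ = fun j => sigmaA k (n - j) := by
      funext j; simp [Nat.succ_sub_succ]
    rw [e, listprod k n]
    rfl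

end BraidAux
/-- For every `f ≥ 1`, in the braid group `B_{f+2}(A)` the element
`T = Δ_f^{-2} Δ_{f+1}^2` satisfies the type-`B` braid relation with `σ̃_{f+1}`:
`σ̃_{f+1} T σ̃_{f+1} T = T σ̃_{f+1} T σ̃_{f+1}`. -/
theorem fullTwist_ratio_typeB_relation (f : ℕ) (hf : 1 ≤ f) :
    sigmaA (f + 2) (f + 1) * ((fullTwistA (f + 2) f)⁻¹ * fullTwistA (f + 2) (f + 1)) *
        sigmaA (f + 2) (f + 1) * ((fullTwistA (f + 2) f)⁻¹ * fullTwistA (f + 2) (f + 1)) =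
      ((fullTwistA (f + 2) f)⁻¹ * fullTwistA (f + 2) (f + 1)) * sigmaA (f + 2) (f + 1) *
        ((fullTwistA (f + 2) f)⁻¹ * fullTwistA (f + 2) (f + 1)) * sigmaA (f + 2) (f + 1) := by
  classical
  have hfull1 : fullTwistA (f+2) f = BraidAux.pw (f+2) (f-1) ^ f := by
    unfold fullTwistA; rw [BraidAux.listprod (f+2) (f-1)]
  have hfull2 : fullTwistA (f+2) (f+1) = BraidAux.pw (f+2) f ^ (f+1) := by
    unfold fullTwistA; simp only [Nat.add_sub_cancel]; rw [BraidAux.listprod (f+2) f]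
  have h1 : BraidAux.pw (f+2) (f-1) ^ f = BraidAux.AAw (f+2) (f-1) ^ 2 := by
    have := BraidAux.twist_eq (f+2) (f-1) (by omega)
    rwa [show f-1+1 = f by omega] at this
  have h2 : BraidAux.pw (f+2) f ^ (f+1) = BraidAux.AAw (f+2) f ^ 2 :=
    BraidAux.twist_eq (f+2) f (by omega)
  have hT : (fullTwistA (f+2) f)⁻¹ * fullTwistA (f+2) (f+1) = BraidAux.aw (f+2) f := by
    rw [hfull1, hfull2, h1, h2, BraidAux.AA_sq (f+2) f hf (by omega)]
    have hc : BraidAux.AAw (f+2) (f-1) * BraidAux.aw (f+2) f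
        = BraidAux.aw (f+2) f * BraidAux.AAw (f+2) (f-1) :=
      BraidAux.comm_AA_aw (f+2) (f-1) (by omega) (by omega)
    have hc2 : BraidAux.AAw (f+2) (f-1) ^ 2 * BraidAux.aw (f+2) f
        = BraidAux.aw (f+2) f * BraidAux.AAw (f+2) (f-1) ^ 2 := by
      rw [sq, mul_assoc, hc, ← mul_assoc, hc, mul_assoc]
    rw [← hc2, inv_mul_cancel_left]
  rw [hT]
  exact BraidAux.rel_step (f+2) f (by omega)
end

section
/- Let r₁, r₂ ≥ 1, r = r₁ + r₂, let α be a partition with at most r₁ parts, β a partition with at most r₂ parts, and let m ≥ β_1 be a positive integer. Let μ be the partition (m+α_1, …, m+α_{r₁}, β_1, …, β_{r₂}) of |α| + |β| + m·r₁. Then for every real q with 0 < q < 1: s_{μ,r}(q) = q^{m r₁(r₁−1)/2 + r₁|β|} · ((1−q)/(1−q^r))^{|μ|} · s_α(1,q,…,q^{r₁−1}) · s_β(1,q,…,q^{r₂−1}) · ∏_{i=1}^{r₁} ∏_{j=1}^{r₂} (1 − q^{m+r₁+α_i−β_j+j−i})/(1 − q^{r₁+j−i}). -/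
open Finset

/-- `n(α) = Σ_{i=1}^{r} (i−1) α_i` for a partition `α` with at most `r` parts,
given as a function `ℕ → ℕ` with the parts indexed `α 1, α 2, …` (1-based). -/
def nStat (r : ℕ) (α : ℕ → ℕ) : ℕ := ∑ i ∈ Icc 1 r, (i - 1) * α i

/-- `|α| = Σ_{i=1}^{r} α_i`, the size of a partition with at most `r` parts. -/
def sizeP (r : ℕ) (α : ℕ → ℕ) : ℕ := ∑ i ∈ Icc 1 r, α i

/-- The principal specialization of the Schur function, given by the product formula
`s_α(1,q,…,q^{r−1}) = q^{n(α)} ∏_{1≤i<j≤r} (1−q^{α_i−α_j+j−i})/(1−q^{j−i})`. -/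
noncomputable def principalSchur (r : ℕ) (α : ℕ → ℕ) (q : ℝ) : ℝ :=
  q ^ nStat r α *
    ∏ i ∈ Icc 1 r, ∏ j ∈ Icc 1 r,
      if i < j then (1 - q ^ ((α i : ℤ) - (α j : ℤ) + (j : ℤ) - (i : ℤ))) /
        (1 - q ^ ((j : ℤ) - (i : ℤ))) else 1

/-- The normalized Schur function
`s_{α,r}(q) = s_α(1,q,…,q^{r−1}) / s_{[1]}(1,q,…,q^{r−1})^{|α|}`, where
`s_{[1]}(1,q,…,q^{r−1}) = (1−q^r)/(1−q)`. -/
noncomputable def normSchur (r : ℕ) (α : ℕ → ℕ) (q : ℝ) : ℝ :=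
  principalSchur r α q / ((1 - q ^ r) / (1 - q)) ^ sizeP r α

/-- The weight function `W_{(α,β)}(q,Q)` for a pair of partitions `α` (at most `r₁`
parts) and `β` (at most `r₂` parts), both 1-based and padded with zeros:
`W_{(α,β)}(q,Q) = q^{n(α)+n(β)} ((1−q)/(1−q^r))^{|α|+|β|}
  ∏_{1≤i<j≤r₁}(1−q^{α_i−α_j+j−i})/(1−q^{j−i}) ·
  ∏_{1≤i<j≤r₂}(1−q^{β_i−β_j+j−i})/(1−q^{j−i}) ·
  ∏_{i=1}^{r₁}∏_{j=1}^{r₂} (Q q^{α_i−i} + q^{β_j−j})/(Q q^{−i} + q^{−j})`,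
with `r = r₁ + r₂`. -/
noncomputable def weightW (r₁ r₂ : ℕ) (α β : ℕ → ℕ) (q Q : ℝ) : ℝ :=
  q ^ (nStat r₁ α + nStat r₂ β) *
    ((1 - q) / (1 - q ^ (r₁ + r₂))) ^ (sizeP r₁ α + sizeP r₂ β) *
    (∏ i ∈ Icc 1 r₁, ∏ j ∈ Icc 1 r₁,
      if i < j then (1 - q ^ ((α i : ℤ) - (α j : ℤ) + (j : ℤ) - (i : ℤ))) /
        (1 - q ^ ((j : ℤ) - (i : ℤ))) else 1) *
    (∏ i ∈ Icc 1 r₂, ∏ j ∈ Icc 1 r₂,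
      if i < j then (1 - q ^ ((β i : ℤ) - (β j : ℤ) + (j : ℤ) - (i : ℤ))) /
        (1 - q ^ ((j : ℤ) - (i : ℤ))) else 1) *
    ∏ i ∈ Icc 1 r₁, ∏ j ∈ Icc 1 r₂,
      (Q * q ^ ((α i : ℤ) - (i : ℤ)) + q ^ ((β j : ℤ) - (j : ℤ))) /
        (Q * q ^ (-(i : ℤ)) + q ^ (-(j : ℤ)))


section auxx
variable {M : Type*} [CommMonoid M]

lemma prod_Icc_add_split (r₁ r₂ : ℕ) (f : ℕ → M) :
    ∏ i ∈ Icc 1 (r₁ + r₂), f i = (∏ i ∈ Icc 1 r₁, f i) * ∏ j ∈ Icc 1 r₂, f (r₁ + j) := by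
  rw [← Finset.Ico_add_one_right_eq_Icc 1 (r₁ + r₂), ← Finset.Ico_add_one_right_eq_Icc 1 r₁, ← Finset.Ico_add_one_right_eq_Icc 1 r₂,
    Finset.prod_Ico_eq_prod_range, Finset.prod_Ico_eq_prod_range, Finset.prod_Ico_eq_prod_range]
  have h1 : r₁ + r₂ + 1 - 1 = r₁ + r₂ := by omega
  have h2 : r₁ + 1 - 1 = r₁ := by omega
  have h3 : r₂ + 1 - 1 = r₂ := by omega
  rw [h1, h2, h3, Finset.prod_range_add]
  congr 1
  exact Finset.prod_congr rfl fun i _ => by congr 1; omega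

lemma sum_Icc_add_split (r₁ r₂ : ℕ) (f : ℕ → ℕ) :
    ∑ i ∈ Icc 1 (r₁ + r₂), f i = (∑ i ∈ Icc 1 r₁, f i) + ∑ j ∈ Icc 1 r₂, f (r₁ + j) := by
  rw [← Finset.Ico_add_one_right_eq_Icc 1 (r₁ + r₂), ← Finset.Ico_add_one_right_eq_Icc 1 r₁, ← Finset.Ico_add_one_right_eq_Icc 1 r₂,
    Finset.sum_Ico_eq_sum_range, Finset.sum_Ico_eq_sum_range, Finset.sum_Ico_eq_sum_range]
  have h1 : r₁ + r₂ + 1 - 1 = r₁ + r₂ := by omega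
  have h2 : r₁ + 1 - 1 = r₁ := by omega
  have h3 : r₂ + 1 - 1 = r₂ := by omega
  rw [h1, h2, h3, Finset.sum_range_add]
  congr 1
  exact Finset.sum_congr rfl fun i _ => by congr 1; omega

lemma sum_Icc_pred (n : ℕ) : ∑ i ∈ Icc 1 n, (i - 1) = n * (n - 1) / 2 := by
  rw [← Finset.Ico_add_one_right_eq_Icc, Finset.sum_Ico_eq_sum_range]
  have h1 : n + 1 - 1 = n := by omega
  rw [h1, ← Finset.sum_range_id n]
  exact Finset.sum_congr rfl fun i _ => by omega

end auxx

/-- Let `r₁, r₂ ≥ 1`, `r = r₁ + r₂`, `α` a partition with at most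
`r₁` parts, `β` a partition with at most `r₂` parts, `m ≥ β_1` a positive integer, and
`μ = (m+α_1, …, m+α_{r₁}, β_1, …, β_{r₂})`. Then for every real `0 < q < 1`:
`s_{μ,r}(q) = q^{m r₁(r₁−1)/2 + r₁|β|} ((1−q)/(1−q^r))^{|μ|}
  s_α(1,q,…,q^{r₁−1}) s_β(1,q,…,q^{r₂−1})
  ∏_{i=1}^{r₁}∏_{j=1}^{r₂} (1 − q^{m+r₁+α_i−β_j+j−i})/(1 − q^{r₁+j−i})`. -/
theorem normSchur_adjoin_rectangle (r₁ r₂ : ℕ) (hr₁ : 1 ≤ r₁) (hr₂ : 1 ≤ r₂)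
    (α β : ℕ → ℕ) (hα : Antitone α) (hα0 : ∀ i, r₁ < i → α i = 0)
    (hβ : Antitone β) (hβ0 : ∀ i, r₂ < i → β i = 0)
    (m : ℕ) (hm : 1 ≤ m) (hmβ : β 1 ≤ m)
    (μ : ℕ → ℕ) (hμ : ∀ i, μ i = if i ≤ r₁ then m + α i else β (i - r₁))
    (q : ℝ) (hq0 : 0 < q) (hq1 : q < 1) :
    normSchur (r₁ + r₂) μ q =
      q ^ (m * r₁ * (r₁ - 1) / 2 + r₁ * sizeP r₂ β) *
        ((1 - q) / (1 - q ^ (r₁ + r₂))) ^ sizeP (r₁ + r₂) μ *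
        principalSchur r₁ α q * principalSchur r₂ β q *
        ∏ i ∈ Icc 1 r₁, ∏ j ∈ Icc 1 r₂,
          (1 - q ^ ((m : ℤ) + (r₁ : ℤ) + (α i : ℤ) - (β j : ℤ) + (j : ℤ) - (i : ℤ))) /
            (1 - q ^ ((r₁ : ℤ) + (j : ℤ) - (i : ℤ))) := by
  -- nStat identity
  have h2dvd : 2 ∣ r₁ * (r₁ - 1) := by
    rcases Nat.even_or_odd r₁ with h | h
    · exact Dvd.dvd.mul_right h.two_dvd _
    · obtain ⟨k, hk⟩ := h
      exact Dvd.dvd.mul_left (by omega : 2 ∣ (r₁ - 1)) _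
  have h1 : ∑ i ∈ Icc 1 r₁, (i - 1) * μ i = m * r₁ * (r₁ - 1) / 2 + nStat r₁ α := by
    have hc : ∀ i ∈ Icc 1 r₁, (i - 1) * μ i = (i - 1) * m + (i - 1) * α i := by
      intro i hi
      rw [hμ i, if_pos (mem_Icc.1 hi).2, Nat.mul_add]
    rw [Finset.sum_congr rfl hc, Finset.sum_add_distrib, ← Finset.sum_mul, sum_Icc_pred, nStat]
    congr 1
    obtain ⟨c, hc2⟩ := h2dvd
    have e1 : m * r₁ * (r₁ - 1) = 2 * (c * m) := by rw [mul_assoc, hc2]; ring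
    rw [hc2, e1, Nat.mul_div_cancel_left _ (by norm_num), Nat.mul_div_cancel_left _ (by norm_num)]
  have h2 : ∑ j ∈ Icc 1 r₂, (r₁ + j - 1) * μ (r₁ + j) = r₁ * sizeP r₂ β + nStat r₂ β := by
    have hc : ∀ j ∈ Icc 1 r₂, (r₁ + j - 1) * μ (r₁ + j) = r₁ * β j + (j - 1) * β j := by
      intro j hj
      have hj1 := (mem_Icc.1 hj).1
      rw [hμ, if_neg (by omega), (by omega : r₁ + j - r₁ = j),
        (by omega : r₁ + j - 1 = r₁ + (j - 1)), Nat.add_mul]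
    rw [Finset.sum_congr rfl hc, Finset.sum_add_distrib, ← Finset.mul_sum, sizeP, nStat]
  have hn : nStat (r₁ + r₂) μ =
      (m * r₁ * (r₁ - 1) / 2 + r₁ * sizeP r₂ β) + (nStat r₁ α + nStat r₂ β) := by
    rw [nStat, sum_Icc_add_split, h1, h2]
    omega
  -- product identity
  have hP : (∏ i ∈ Icc 1 (r₁ + r₂), ∏ j ∈ Icc 1 (r₁ + r₂),
        if i < j then (1 - q ^ ((μ i : ℤ) - (μ j : ℤ) + (j : ℤ) - (i : ℤ))) /
          (1 - q ^ ((j : ℤ) - (i : ℤ))) else 1)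
      = (∏ i ∈ Icc 1 r₁, ∏ j ∈ Icc 1 r₁,
          if i < j then (1 - q ^ ((α i : ℤ) - (α j : ℤ) + (j : ℤ) - (i : ℤ))) /
            (1 - q ^ ((j : ℤ) - (i : ℤ))) else 1)
        * (∏ i ∈ Icc 1 r₂, ∏ j ∈ Icc 1 r₂,
          if i < j then (1 - q ^ ((β i : ℤ) - (β j : ℤ) + (j : ℤ) - (i : ℤ))) /
            (1 - q ^ ((j : ℤ) - (i : ℤ))) else 1)
        * ∏ i ∈ Icc 1 r₁, ∏ j ∈ Icc 1 r₂,
          (1 - q ^ ((m : ℤ) + (r₁ : ℤ) + (α i : ℤ) - (β j : ℤ) + (j : ℤ) - (i : ℤ))) /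
            (1 - q ^ ((r₁ : ℤ) + (j : ℤ) - (i : ℤ))) := by
    simp only [prod_Icc_add_split r₁ r₂]
    rw [Finset.prod_mul_distrib, Finset.prod_mul_distrib]
    have e11 : (∏ i ∈ Icc 1 r₁, ∏ j ∈ Icc 1 r₁,
        if i < j then (1 - q ^ ((μ i : ℤ) - (μ j : ℤ) + (j : ℤ) - (i : ℤ))) /
          (1 - q ^ ((j : ℤ) - (i : ℤ))) else 1)
        = ∏ i ∈ Icc 1 r₁, ∏ j ∈ Icc 1 r₁,
          if i < j then (1 - q ^ ((α i : ℤ) - (α j : ℤ) + (j : ℤ) - (i : ℤ))) /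
            (1 - q ^ ((j : ℤ) - (i : ℤ))) else 1 := by
      refine Finset.prod_congr rfl fun i hi => Finset.prod_congr rfl fun j hj => ?_
      by_cases h : i < j
      · rw [if_pos h, if_pos h, hμ i, hμ j, if_pos (mem_Icc.1 hi).2, if_pos (mem_Icc.1 hj).2,
          show ((m + α i : ℕ) : ℤ) - ((m + α j : ℕ) : ℤ) + (j : ℤ) - (i : ℤ)
            = (α i : ℤ) - (α j : ℤ) + (j : ℤ) - (i : ℤ) from by push_cast; ring]
      · rw [if_neg h, if_neg h]
    have e12 : (∏ i ∈ Icc 1 r₁, ∏ j ∈ Icc 1 r₂,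
        if i < r₁ + j then (1 - q ^ ((μ i : ℤ) - (μ (r₁ + j) : ℤ) + ((r₁ + j : ℕ) : ℤ) - (i : ℤ))) /
          (1 - q ^ (((r₁ + j : ℕ) : ℤ) - (i : ℤ))) else 1)
        = ∏ i ∈ Icc 1 r₁, ∏ j ∈ Icc 1 r₂,
          (1 - q ^ ((m : ℤ) + (r₁ : ℤ) + (α i : ℤ) - (β j : ℤ) + (j : ℤ) - (i : ℤ))) /
            (1 - q ^ ((r₁ : ℤ) + (j : ℤ) - (i : ℤ))) := by
      refine Finset.prod_congr rfl fun i hi => Finset.prod_congr rfl fun j hj => ?_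
      have hi2 := (mem_Icc.1 hi).2
      have hj1 := (mem_Icc.1 hj).1
      rw [if_pos (by omega), hμ i, if_pos hi2, hμ (r₁ + j), if_neg (by omega),
        (by omega : r₁ + j - r₁ = j),
        show ((m + α i : ℕ) : ℤ) - ((β j : ℕ) : ℤ) + ((r₁ + j : ℕ) : ℤ) - (i : ℤ)
          = (m : ℤ) + (r₁ : ℤ) + (α i : ℤ) - (β j : ℤ) + (j : ℤ) - (i : ℤ) from by push_cast; ring,
        show ((r₁ + j : ℕ) : ℤ) - (i : ℤ) = (r₁ : ℤ) + (j : ℤ) - (i : ℤ) from by push_cast; ring]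
    have e21 : (∏ i ∈ Icc 1 r₂, ∏ j ∈ Icc 1 r₁,
        if r₁ + i < j then (1 - q ^ ((μ (r₁ + i) : ℤ) - (μ j : ℤ) + (j : ℤ) - ((r₁ + i : ℕ) : ℤ))) /
          (1 - q ^ ((j : ℤ) - ((r₁ + i : ℕ) : ℤ))) else 1) = 1 := by
      refine Finset.prod_eq_one fun i hi => Finset.prod_eq_one fun j hj => ?_
      have hj2 := (mem_Icc.1 hj).2
      have hi1 := (mem_Icc.1 hi).1
      rw [if_neg (by omega)]
    have e22 : (∏ i ∈ Icc 1 r₂, ∏ j ∈ Icc 1 r₂,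
        if r₁ + i < r₁ + j then
          (1 - q ^ ((μ (r₁ + i) : ℤ) - (μ (r₁ + j) : ℤ) + ((r₁ + j : ℕ) : ℤ) - ((r₁ + i : ℕ) : ℤ))) /
          (1 - q ^ (((r₁ + j : ℕ) : ℤ) - ((r₁ + i : ℕ) : ℤ))) else 1)
        = ∏ i ∈ Icc 1 r₂, ∏ j ∈ Icc 1 r₂,
          if i < j then (1 - q ^ ((β i : ℤ) - (β j : ℤ) + (j : ℤ) - (i : ℤ))) /
            (1 - q ^ ((j : ℤ) - (i : ℤ))) else 1 := by
      refine Finset.prod_congr rfl fun i hi => Finset.prod_congr rfl fun j hj => ?_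
      have hi1 := (mem_Icc.1 hi).1
      have hj1 := (mem_Icc.1 hj).1
      by_cases h : i < j
      · rw [if_pos (by omega), if_pos h, hμ (r₁ + i), if_neg (by omega), hμ (r₁ + j),
          if_neg (by omega), (by omega : r₁ + i - r₁ = i), (by omega : r₁ + j - r₁ = j),
          show ((β i : ℕ) : ℤ) - ((β j : ℕ) : ℤ) + ((r₁ + j : ℕ) : ℤ) - ((r₁ + i : ℕ) : ℤ)
            = (β i : ℤ) - (β j : ℤ) + (j : ℤ) - (i : ℤ) from by push_cast; ring,
          show ((r₁ + j : ℕ) : ℤ) - ((r₁ + i : ℕ) : ℤ) = (j : ℤ) - (i : ℤ) from by push_cast; ring]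
      · rw [if_neg (by omega), if_neg h]
    rw [e11, e12, e21, e22]
    ring
  have key : principalSchur (r₁ + r₂) μ q =
      q ^ (m * r₁ * (r₁ - 1) / 2 + r₁ * sizeP r₂ β) * principalSchur r₁ α q *
        principalSchur r₂ β q *
        ∏ i ∈ Icc 1 r₁, ∏ j ∈ Icc 1 r₂,
          (1 - q ^ ((m : ℤ) + (r₁ : ℤ) + (α i : ℤ) - (β j : ℤ) + (j : ℤ) - (i : ℤ))) /
            (1 - q ^ ((r₁ : ℤ) + (j : ℤ) - (i : ℤ))) := by
    rw [principalSchur, principalSchur, principalSchur, hn, hP, pow_add, pow_add]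
    ring
  rw [normSchur, div_eq_mul_inv, ← inv_pow, inv_div, key]
  ring
end

section
/- Let r₁, r₂ ≥ 1, r = r₁ + r₂, let α be a partition with at most r₁ parts, β a partition with at most r₂ parts, and let m ≥ β_1 be a positive integer. Let μ = (m+α_1, …, m+α_{r₁}, β_1, …, β_{r₂}). Then for every real q with 0 < q < 1: s_{μ,r}(q) / s_{[m^{r₁}],r}(q) = W_{(α,β)}(q, −q^{r₁+m}). -/
open Finset

/-- splitting a product over `Icc 1 (a+b)` -/
lemma prodSplit {M : Type*} [CommMonoid M] (a b : ℕ) (f : ℕ → M) :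
    ∏ i ∈ Icc 1 (a+b), f i = (∏ i ∈ Icc 1 a, f i) * ∏ i ∈ Icc 1 b, f (a+i) := by
  rw [← Finset.Ico_add_one_right_eq_Icc, ← Finset.Ico_add_one_right_eq_Icc, ← Finset.Ico_add_one_right_eq_Icc]
  rw [← Finset.prod_Ico_consecutive f (by omega : 1 ≤ a+1) (by omega : a+1 ≤ a+b+1)]
  congr 1
  rw [Finset.prod_Ico_eq_prod_range, Finset.prod_Ico_eq_prod_range]
  apply Finset.prod_congr (by congr 1; omega)
  intro x _
  congr 1
  omega

lemma sumSplit (a b : ℕ) (f : ℕ → ℕ) :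
    ∑ i ∈ Icc 1 (a+b), f i = (∑ i ∈ Icc 1 a, f i) + ∑ i ∈ Icc 1 b, f (a+i) := by
  rw [← Finset.Ico_add_one_right_eq_Icc, ← Finset.Ico_add_one_right_eq_Icc, ← Finset.Ico_add_one_right_eq_Icc]
  rw [← Finset.sum_Ico_consecutive f (by omega : 1 ≤ a+1) (by omega : a+1 ≤ a+b+1)]
  congr 1
  rw [Finset.sum_Ico_eq_sum_range, Finset.sum_Ico_eq_sum_range]
  apply Finset.sum_congr (by congr 1; omega)
  intro x _
  congr 1
  omega

lemma one_sub_zpow_pos {q : ℝ} (hq0 : 0 < q) (hq1 : q < 1) {e : ℤ} (he : 0 < e) :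
    0 < 1 - q ^ e := by
  have : q ^ e < 1 := by
    calc q ^ e < q ^ (0:ℤ) := zpow_lt_zpow_right_of_lt_one₀ hq0 hq1 he
    _ = 1 := zpow_zero q
  linarith

lemma one_sub_zpow_ne {q : ℝ} (hq0 : 0 < q) (hq1 : q < 1) {e : ℤ} (he : 0 < e) :
    1 - q ^ e ≠ 0 := ne_of_gt (one_sub_zpow_pos hq0 hq1 he)

set_option maxHeartbeats 1000000 in
/-- Let `r₁, r₂ ≥ 1`, `r = r₁ + r₂`, `α` a partition with at most
`r₁` parts, `β` a partition with at most `r₂` parts, `m ≥ β_1` a positive integer,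
and `μ = (m+α_1, …, m+α_{r₁}, β_1, …, β_{r₂})`. Then for every real `0 < q < 1`:
`s_{μ,r}(q) / s_{[m^{r₁}],r}(q) = W_{(α,β)}(q, −q^{r₁+m})`. -/
theorem normSchur_ratio_eq_weightW (r₁ r₂ : ℕ) (hr₁ : 1 ≤ r₁) (hr₂ : 1 ≤ r₂)
    (α β : ℕ → ℕ) (hα : Antitone α) (hα0 : ∀ i, r₁ < i → α i = 0)
    (hβ : Antitone β) (hβ0 : ∀ i, r₂ < i → β i = 0)
    (m : ℕ) (hm : 1 ≤ m) (hmβ : β 1 ≤ m)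
    (μ : ℕ → ℕ) (hμ : ∀ i, μ i = if i ≤ r₁ then m + α i else β (i - r₁))
    (q : ℝ) (hq0 : 0 < q) (hq1 : q < 1) :
    normSchur (r₁ + r₂) μ q /
        normSchur (r₁ + r₂) (fun i => if i ≤ r₁ then m else 0) q =
      weightW r₁ r₂ α β q (-(q ^ (r₁ + m))) := by
  have hqne : q ≠ 0 := ne_of_gt hq0
  set ρ : ℕ → ℕ := fun i => if i ≤ r₁ then m else 0 with hρ
  set A₁ : ℝ := ∏ i ∈ Icc 1 r₁, ∏ j ∈ Icc 1 r₁,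
      if i < j then (1 - q ^ ((α i : ℤ) - (α j : ℤ) + (j : ℤ) - (i : ℤ))) /
        (1 - q ^ ((j : ℤ) - (i : ℤ))) else 1 with hA₁
  set A₂ : ℝ := ∏ i ∈ Icc 1 r₂, ∏ j ∈ Icc 1 r₂,
      if i < j then (1 - q ^ ((β i : ℤ) - (β j : ℤ) + (j : ℤ) - (i : ℤ))) /
        (1 - q ^ ((j : ℤ) - (i : ℤ))) else 1 with hA₂
  set Nu1 : ℝ := ∏ i ∈ Icc 1 r₁, ∏ j ∈ Icc 1 r₂,
      (1 - q ^ ((m:ℤ) + (α i : ℤ) - (β j : ℤ) + (r₁:ℤ) + (j:ℤ) - (i:ℤ))) with hNu1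
  set Nu2 : ℝ := ∏ i ∈ Icc 1 r₁, ∏ j ∈ Icc 1 r₂,
      (1 - q ^ ((m:ℤ) + (r₁:ℤ) + (j:ℤ) - (i:ℤ))) with hNu2
  set D : ℝ := ∏ i ∈ Icc 1 r₁, ∏ j ∈ Icc 1 r₂,
      (1 - q ^ ((r₁:ℤ) + (j:ℤ) - (i:ℤ))) with hD
  have hNu2ne : Nu2 ≠ 0 := by
    rw [hNu2]
    apply Finset.prod_ne_zero_iff.mpr
    intro i hi
    apply Finset.prod_ne_zero_iff.mpr
    intro j hj
    simp only [mem_Icc] at hi hj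
    exact one_sub_zpow_ne hq0 hq1 (by omega)
  have hDne : D ≠ 0 := by
    rw [hD]
    apply Finset.prod_ne_zero_iff.mpr
    intro i hi
    apply Finset.prod_ne_zero_iff.mpr
    intro j hj
    simp only [mem_Icc] at hi hj
    exact one_sub_zpow_ne hq0 hq1 (by omega)
  have h1q : (1:ℝ) - q ≠ 0 := by nlinarith
  have hqr : (1:ℝ) - q ^ (r₁ + r₂) ≠ 0 := by
    have : q ^ (r₁+r₂) < 1 := pow_lt_one₀ (le_of_lt hq0) hq1 (by omega)
    nlinarith
  have hnμ : nStat (r₁+r₂) μ =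
      nStat (r₁+r₂) ρ + (nStat r₁ α + nStat r₂ β + r₁ * sizeP r₂ β) := by
    simp only [nStat, sizeP]
    rw [sumSplit r₁ r₂ (fun i => (i-1) * μ i), sumSplit r₁ r₂ (fun i => (i-1) * ρ i)]
    have h1 : ∑ i ∈ Icc 1 r₁, (i-1) * μ i
        = (∑ i ∈ Icc 1 r₁, (i-1) * m) + ∑ i ∈ Icc 1 r₁, (i-1) * α i := by
      rw [← Finset.sum_add_distrib]
      refine Finset.sum_congr rfl fun i hi => ?_
      rw [hμ i, if_pos (mem_Icc.mp hi).2, Nat.mul_add]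
    have h2 : ∑ i ∈ Icc 1 r₂, (r₁+i-1) * μ (r₁+i)
        = (∑ i ∈ Icc 1 r₂, (i-1) * β i) + r₁ * ∑ i ∈ Icc 1 r₂, β i := by
      rw [Finset.mul_sum, ← Finset.sum_add_distrib]
      refine Finset.sum_congr rfl fun i hi => ?_
      have hi1 := (mem_Icc.mp hi).1
      rw [hμ, if_neg (by omega)]
      have e : (r₁ + i) - r₁ = i := by omega
      rw [e]
      have e' : r₁ + i - 1 = (i-1) + r₁ := by omega
      rw [e', Nat.add_mul]
    have h3 : ∑ i ∈ Icc 1 r₁, (i-1) * ρ i = ∑ i ∈ Icc 1 r₁, (i-1) * m := by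
      refine Finset.sum_congr rfl fun i hi => ?_
      simp only [hρ]
      rw [if_pos (mem_Icc.mp hi).2]
    have h4 : ∑ i ∈ Icc 1 r₂, (r₁+i-1) * ρ (r₁+i) = 0 := by
      refine Finset.sum_eq_zero fun i hi => ?_
      have hi1 := (mem_Icc.mp hi).1
      simp only [hρ]
      rw [if_neg (by omega), Nat.mul_zero]
    omega
  have hsμ : sizeP (r₁+r₂) μ =
      sizeP (r₁+r₂) ρ + (sizeP r₁ α + sizeP r₂ β) := by
    simp only [sizeP]
    rw [sumSplit r₁ r₂ μ, sumSplit r₁ r₂ ρ]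
    have h1 : ∑ i ∈ Icc 1 r₁, μ i = (∑ _i ∈ Icc 1 r₁, m) + ∑ i ∈ Icc 1 r₁, α i := by
      rw [← Finset.sum_add_distrib]
      exact Finset.sum_congr rfl fun i hi => by rw [hμ i, if_pos (mem_Icc.mp hi).2]
    have h2 : ∑ i ∈ Icc 1 r₂, μ (r₁+i) = ∑ i ∈ Icc 1 r₂, β i := by
      refine Finset.sum_congr rfl fun i hi => ?_
      have hi1 := (mem_Icc.mp hi).1
      rw [hμ, if_neg (by omega)]
      congr 1
      omega
    have h3 : ∑ i ∈ Icc 1 r₁, ρ i = ∑ _i ∈ Icc 1 r₁, m := by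
      refine Finset.sum_congr rfl fun i hi => ?_
      simp only [hρ]
      rw [if_pos (mem_Icc.mp hi).2]
    have h4 : ∑ i ∈ Icc 1 r₂, ρ (r₁+i) = 0 := by
      refine Finset.sum_eq_zero fun i hi => ?_
      have hi1 := (mem_Icc.mp hi).1
      simp only [hρ]
      rw [if_neg (by omega)]
    omega
  have hPμ : (∏ i ∈ Icc 1 (r₁+r₂), ∏ j ∈ Icc 1 (r₁+r₂),
      if i < j then (1 - q ^ ((μ i : ℤ) - (μ j : ℤ) + (j : ℤ) - (i : ℤ))) /
        (1 - q ^ ((j : ℤ) - (i : ℤ))) else 1) = A₁ * (Nu1 / D) * A₂ := by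
    rw [prodSplit r₁ r₂]
    have e1 : (∏ i ∈ Icc 1 r₁, ∏ j ∈ Icc 1 (r₁+r₂),
        if i < j then (1 - q ^ ((μ i : ℤ) - (μ j : ℤ) + (j : ℤ) - (i : ℤ))) /
          (1 - q ^ ((j : ℤ) - (i : ℤ))) else 1) = A₁ * (Nu1 / D) := by
      have hsp : ∀ i ∈ Icc 1 r₁, (∏ j ∈ Icc 1 (r₁+r₂),
          if i < j then (1 - q ^ ((μ i : ℤ) - (μ j : ℤ) + (j : ℤ) - (i : ℤ))) /
            (1 - q ^ ((j : ℤ) - (i : ℤ))) else 1)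
          = (∏ j ∈ Icc 1 r₁,
              if i < j then (1 - q ^ ((μ i : ℤ) - (μ j : ℤ) + (j : ℤ) - (i : ℤ))) /
                (1 - q ^ ((j : ℤ) - (i : ℤ))) else 1) *
            (∏ j ∈ Icc 1 r₂,
              if i < r₁+j then (1 - q ^ ((μ i : ℤ) - (μ (r₁+j) : ℤ) + ((r₁+j : ℕ) : ℤ) - (i : ℤ))) /
                (1 - q ^ (((r₁+j : ℕ) : ℤ) - (i : ℤ))) else 1) :=
        fun i _ => prodSplit r₁ r₂ _
      rw [Finset.prod_congr rfl hsp, Finset.prod_mul_distrib]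
      congr 1
      · rw [hA₁]
        refine Finset.prod_congr rfl fun i hi => Finset.prod_congr rfl fun j hj => ?_
        have hi2 := (mem_Icc.mp hi).2
        have hj2 := (mem_Icc.mp hj).2
        have h : ((μ i : ℤ) - μ j + j - i) = ((α i : ℤ) - α j + j - i) := by
          rw [hμ i, hμ j, if_pos hi2, if_pos hj2]
          push_cast
          ring
        rw [h]
      · rw [hNu1, hD, ← Finset.prod_div_distrib]
        refine Finset.prod_congr rfl fun i hi => ?_
        rw [← Finset.prod_div_distrib]
        refine Finset.prod_congr rfl fun j hj => ?_
        have hi' := mem_Icc.mp hi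
        have hj' := mem_Icc.mp hj
        rw [if_pos (by omega : i < r₁ + j)]
        have h1 : ((μ i : ℤ) - μ (r₁+j) + ((r₁+j : ℕ) : ℤ) - i)
            = ((m:ℤ) + α i - β j + r₁ + j - i) := by
          rw [hμ i, hμ (r₁+j), if_pos hi'.2, if_neg (by omega)]
          have e : (r₁ + j) - r₁ = j := by omega
          rw [e]
          push_cast
          ring
        have h2 : (((r₁+j : ℕ) : ℤ) - (i:ℤ)) = ((r₁:ℤ) + j - i) := by push_cast; ring
        rw [h1, h2]
    have e2 : (∏ i ∈ Icc 1 r₂, ∏ j ∈ Icc 1 (r₁+r₂),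
        if r₁+i < j then (1 - q ^ ((μ (r₁+i) : ℤ) - (μ j : ℤ) + (j : ℤ) - ((r₁+i : ℕ) : ℤ))) /
          (1 - q ^ ((j : ℤ) - ((r₁+i : ℕ) : ℤ))) else 1) = A₂ := by
      have hsp : ∀ i ∈ Icc 1 r₂, (∏ j ∈ Icc 1 (r₁+r₂),
          if r₁+i < j then (1 - q ^ ((μ (r₁+i) : ℤ) - (μ j : ℤ) + (j : ℤ) - ((r₁+i : ℕ) : ℤ))) /
            (1 - q ^ ((j : ℤ) - ((r₁+i : ℕ) : ℤ))) else 1)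
          = (∏ j ∈ Icc 1 r₁,
              if r₁+i < j then (1 - q ^ ((μ (r₁+i) : ℤ) - (μ j : ℤ) + (j : ℤ) - ((r₁+i : ℕ) : ℤ))) /
                (1 - q ^ ((j : ℤ) - ((r₁+i : ℕ) : ℤ))) else 1) *
            (∏ j ∈ Icc 1 r₂,
              if r₁+i < r₁+j then (1 - q ^ ((μ (r₁+i) : ℤ) - (μ (r₁+j) : ℤ) + ((r₁+j : ℕ) : ℤ) - ((r₁+i : ℕ) : ℤ))) /
                (1 - q ^ (((r₁+j : ℕ) : ℤ) - ((r₁+i : ℕ) : ℤ))) else 1) :=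
        fun i _ => prodSplit r₁ r₂ _
      rw [Finset.prod_congr rfl hsp, Finset.prod_mul_distrib]
      have z1 : (∏ i ∈ Icc 1 r₂, ∏ j ∈ Icc 1 r₁,
          if r₁+i < j then (1 - q ^ ((μ (r₁+i) : ℤ) - (μ j : ℤ) + (j : ℤ) - ((r₁+i : ℕ) : ℤ))) /
            (1 - q ^ ((j : ℤ) - ((r₁+i : ℕ) : ℤ))) else 1) = 1 := by
        refine Finset.prod_eq_one fun i hi => Finset.prod_eq_one fun j hj => ?_
        have hi1 := (mem_Icc.mp hi).1
        have hj2 := (mem_Icc.mp hj).2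
        rw [if_neg (by omega)]
      rw [z1, one_mul, hA₂]
      refine Finset.prod_congr rfl fun i hi => Finset.prod_congr rfl fun j hj => ?_
      have hi1 := (mem_Icc.mp hi).1
      have hj1 := (mem_Icc.mp hj).1
      have hexp : ((μ (r₁+i) : ℤ) - μ (r₁+j) + ((r₁+j:ℕ):ℤ) - ((r₁+i:ℕ):ℤ))
          = ((β i:ℤ) - β j + j - i) := by
        rw [hμ (r₁+i), hμ (r₁+j), if_neg (by omega), if_neg (by omega)]
        have e : (r₁ + i) - r₁ = i := by omega
        have e' : (r₁ + j) - r₁ = j := by omega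
        rw [e, e']
        push_cast
        ring
      have hexp2 : (((r₁+j:ℕ)):ℤ) - ((r₁+i:ℕ):ℤ) = (j:ℤ) - i := by push_cast; ring
      rw [hexp, hexp2]
      simp only [add_lt_add_iff_left]
    rw [e1, e2]
  have hPρ : (∏ i ∈ Icc 1 (r₁+r₂), ∏ j ∈ Icc 1 (r₁+r₂),
      if i < j then (1 - q ^ ((ρ i : ℤ) - (ρ j : ℤ) + (j : ℤ) - (i : ℤ))) /
        (1 - q ^ ((j : ℤ) - (i : ℤ))) else 1) = Nu2 / D := by
    rw [prodSplit r₁ r₂]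
    have e1 : (∏ i ∈ Icc 1 r₁, ∏ j ∈ Icc 1 (r₁+r₂),
        if i < j then (1 - q ^ ((ρ i : ℤ) - (ρ j : ℤ) + (j : ℤ) - (i : ℤ))) /
          (1 - q ^ ((j : ℤ) - (i : ℤ))) else 1) = Nu2 / D := by
      have hsp : ∀ i ∈ Icc 1 r₁, (∏ j ∈ Icc 1 (r₁+r₂),
          if i < j then (1 - q ^ ((ρ i : ℤ) - (ρ j : ℤ) + (j : ℤ) - (i : ℤ))) /
            (1 - q ^ ((j : ℤ) - (i : ℤ))) else 1)
          = (∏ j ∈ Icc 1 r₁,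
              if i < j then (1 - q ^ ((ρ i : ℤ) - (ρ j : ℤ) + (j : ℤ) - (i : ℤ))) /
                (1 - q ^ ((j : ℤ) - (i : ℤ))) else 1) *
            (∏ j ∈ Icc 1 r₂,
              if i < r₁+j then (1 - q ^ ((ρ i : ℤ) - (ρ (r₁+j) : ℤ) + ((r₁+j : ℕ) : ℤ) - (i : ℤ))) /
                (1 - q ^ (((r₁+j : ℕ) : ℤ) - (i : ℤ))) else 1) :=
        fun i _ => prodSplit r₁ r₂ _
      rw [Finset.prod_congr rfl hsp, Finset.prod_mul_distrib]
      have z1 : (∏ i ∈ Icc 1 r₁, ∏ j ∈ Icc 1 r₁,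
          if i < j then (1 - q ^ ((ρ i : ℤ) - (ρ j : ℤ) + (j : ℤ) - (i : ℤ))) /
            (1 - q ^ ((j : ℤ) - (i : ℤ))) else 1) = 1 := by
        refine Finset.prod_eq_one fun i hi => Finset.prod_eq_one fun j hj => ?_
        have hi2 := (mem_Icc.mp hi).2
        have hj2 := (mem_Icc.mp hj).2
        by_cases h : i < j
        · rw [if_pos h]
          have e : ((ρ i : ℤ) - ρ j + j - i) = ((j:ℤ) - i) := by
            simp only [hρ]
            rw [if_pos hi2, if_pos hj2]
            ring
          rw [e, div_self (one_sub_zpow_ne hq0 hq1 (by omega))]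
        · rw [if_neg h]
      rw [z1, one_mul, hNu2, hD, ← Finset.prod_div_distrib]
      refine Finset.prod_congr rfl fun i hi => ?_
      rw [← Finset.prod_div_distrib]
      refine Finset.prod_congr rfl fun j hj => ?_
      have hi' := mem_Icc.mp hi
      have hj' := mem_Icc.mp hj
      rw [if_pos (by omega : i < r₁ + j)]
      have h1 : ((ρ i : ℤ) - ρ (r₁+j) + ((r₁+j : ℕ) : ℤ) - i) = ((m:ℤ) + r₁ + j - i) := by
        simp only [hρ]
        rw [if_pos hi'.2, if_neg (by omega)]
        push_cast
        ring
      have h2 : (((r₁+j : ℕ) : ℤ) - (i:ℤ)) = ((r₁:ℤ) + j - i) := by push_cast; ring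
      rw [h1, h2]
    have e2 : (∏ i ∈ Icc 1 r₂, ∏ j ∈ Icc 1 (r₁+r₂),
        if r₁+i < j then (1 - q ^ ((ρ (r₁+i) : ℤ) - (ρ j : ℤ) + (j : ℤ) - ((r₁+i : ℕ) : ℤ))) /
          (1 - q ^ ((j : ℤ) - ((r₁+i : ℕ) : ℤ))) else 1) = 1 := by
      refine Finset.prod_eq_one fun i hi => Finset.prod_eq_one fun j hj => ?_
      have hi1 := (mem_Icc.mp hi).1
      have hj' := mem_Icc.mp hj
      by_cases h : r₁ + i < j
      · rw [if_pos h]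
        have e : ((ρ (r₁+i) : ℤ) - ρ j + j - ((r₁+i:ℕ):ℤ)) = ((j:ℤ) - ((r₁+i:ℕ):ℤ)) := by
          simp only [hρ]
          rw [if_neg (by omega), if_neg (by omega)]
          push_cast
          ring
        rw [e, div_self (one_sub_zpow_ne hq0 hq1 (by push_cast; omega))]
      · rw [if_neg h]
    rw [e1, e2, mul_one]
  have hW : weightW r₁ r₂ α β q (-(q ^ (r₁ + m))) =
      q ^ (nStat r₁ α + nStat r₂ β) *
        ((1 - q) / (1 - q ^ (r₁ + r₂))) ^ (sizeP r₁ α + sizeP r₂ β) *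
        A₁ * A₂ * (q ^ (r₁ * sizeP r₂ β) * (Nu1 / Nu2)) := by
    simp only [weightW]
    rw [← hA₁, ← hA₂]
    congr 1
    have point : ∀ i ∈ Icc 1 r₁, ∀ j ∈ Icc 1 r₂,
        (-(q ^ (r₁ + m)) * q ^ ((α i : ℤ) - (i : ℤ)) + q ^ ((β j : ℤ) - (j : ℤ))) /
          (-(q ^ (r₁ + m)) * q ^ (-(i : ℤ)) + q ^ (-(j : ℤ)))
        = q ^ (β j) * ((1 - q ^ ((m:ℤ) + (α i : ℤ) - (β j : ℤ) + (r₁:ℤ) + (j:ℤ) - (i:ℤ))) /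
            (1 - q ^ ((m:ℤ) + (r₁:ℤ) + (j:ℤ) - (i:ℤ)))) := by
      intro i hi j hj
      have hi' := mem_Icc.mp hi
      have hj' := mem_Icc.mp hj
      have hnum : -(q ^ (r₁ + m)) * q ^ ((α i : ℤ) - (i : ℤ)) + q ^ ((β j : ℤ) - (j : ℤ))
          = q ^ ((β j : ℤ) - (j : ℤ)) *
            (1 - q ^ ((m:ℤ) + (α i : ℤ) - (β j : ℤ) + (r₁:ℤ) + (j:ℤ) - (i:ℤ))) := by
        rw [mul_one_sub, ← zpow_natCast q (r₁ + m), neg_mul, ← zpow_add₀ hqne,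
          ← zpow_add₀ hqne]
        rw [show ((r₁+m:ℕ):ℤ) + ((α i:ℤ) - (i:ℤ))
            = ((β j:ℤ) - (j:ℤ)) + ((m:ℤ) + (α i:ℤ) - (β j:ℤ) + (r₁:ℤ) + (j:ℤ) - (i:ℤ)) by
          push_cast; ring]
        ring
      have hden : -(q ^ (r₁ + m)) * q ^ (-(i:ℤ)) + q ^ (-(j:ℤ))
          = q ^ (-(j:ℤ)) * (1 - q ^ ((m:ℤ) + (r₁:ℤ) + (j:ℤ) - (i:ℤ))) := by
        rw [mul_one_sub, ← zpow_natCast q (r₁ + m), neg_mul, ← zpow_add₀ hqne,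
          ← zpow_add₀ hqne]
        rw [show ((r₁+m:ℕ):ℤ) + (-(i:ℤ)) = (-(j:ℤ)) + ((m:ℤ) + (r₁:ℤ) + (j:ℤ) - (i:ℤ)) by
          push_cast; ring]
        ring
      rw [hnum, hden, mul_div_mul_comm, ← zpow_sub₀ hqne]
      rw [show ((β j:ℤ) - (j:ℤ)) - (-(j:ℤ)) = ((β j : ℕ) : ℤ) by ring, zpow_natCast]
    rw [Finset.prod_congr rfl (fun i hi => Finset.prod_congr rfl (point i hi))]
    simp only [Finset.prod_mul_distrib]
    have hq1' : ∀ i ∈ Icc 1 r₁, (∏ j ∈ Icc 1 r₂, q ^ (β j)) = q ^ (sizeP r₂ β) := by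
      intro i _
      rw [Finset.prod_pow_eq_pow_sum]
      rfl
    rw [Finset.prod_congr rfl hq1', Finset.prod_const, Nat.card_Icc, ← pow_mul]
    have hcard : sizeP r₂ β * (r₁ + 1 - 1) = r₁ * sizeP r₂ β := by
      have : r₁ + 1 - 1 = r₁ := by omega
      rw [this, Nat.mul_comm]
    rw [hcard]
    congr 1
    rw [hNu1, hNu2, ← Finset.prod_div_distrib]
    exact Finset.prod_congr rfl fun i _ => Finset.prod_div_distrib _ _
  rw [hW]
  simp only [normSchur, principalSchur]
  rw [hPμ, hPρ, hnμ, hsμ]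
  rw [pow_add q (nStat (r₁+r₂) ρ), pow_add q (nStat r₁ α + nStat r₂ β),
    pow_add q (nStat r₁ α), pow_add ((1 - q ^ (r₁+r₂))/(1-q)) (sizeP (r₁+r₂) ρ)]
  field_simp
  rw [mul_assoc (A₁ * Nu1 * A₂), ← mul_pow, div_mul_div_comm, mul_comm (1 - q ^ (r₁ + r₂)) (1 - q),
    div_self (mul_ne_zero h1q hqr), one_pow, mul_one]
end

section
/- Let F be a field, q ∈ F invertible, and let H_k(q) be the Hecke algebra of type A_{k−1} over F. For f ≥ 1 and k ≥ f + 2, each generator g̃_i is invertible in H_k(q) (with inverse q^{−1} g̃_i + (q^{−1} − 1)·1), hence T := Δ_f^{−2} Δ_{f+1}^{2} is a well-defined invertible element of H_k(q), where Δ_j^{2} = (g̃_{j−1} ⋯ g̃_1)^j. Then T satisfies the defining relations of the type-B generator: T g̃_{f+1} T g̃_{f+1} = g̃_{f+1} T g̃_{f+1} T, and T g̃_{f+i} = g̃_{f+i} T for all i with 2 ≤ i ≤ k − f − 1. -/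
/-- The defining relations of the Hecke algebra `H_k(q)` of type `A_{k−1}` over a
field `F`: with generators `g̃_1, …, g̃_{k-1}` (generator `i : Fin (k-1)`
corresponding to `g̃_{i+1}`), the braid relations, the commuting relations, and the
quadratic relations `g̃_i² = (q−1) g̃_i + q`. -/
inductive heckeRel (F : Type) [Field F] (q : F) (k : ℕ) :
    FreeAlgebra F (Fin (k - 1)) → FreeAlgebra F (Fin (k - 1)) → Prop
  | braid (i j : Fin (k - 1)) (h : (j : ℕ) = (i : ℕ) + 1) :
      heckeRel F q k (FreeAlgebra.ι F i * FreeAlgebra.ι F j * FreeAlgebra.ι F i)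
        (FreeAlgebra.ι F j * FreeAlgebra.ι F i * FreeAlgebra.ι F j)
  | comm (i j : Fin (k - 1)) (h : (i : ℕ) + 2 ≤ (j : ℕ)) :
      heckeRel F q k (FreeAlgebra.ι F i * FreeAlgebra.ι F j)
        (FreeAlgebra.ι F j * FreeAlgebra.ι F i)
  | quad (i : Fin (k - 1)) :
      heckeRel F q k (FreeAlgebra.ι F i * FreeAlgebra.ι F i)
        ((q - 1) • FreeAlgebra.ι F i + q • 1)

/-- The Hecke algebra `H_k(q)` of type `A_{k−1}` over `F`. -/
abbrev HeckeA (F : Type) [Field F] (q : F) (k : ℕ) := RingQuot (heckeRel F q k)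

/-- The generator `g̃_i` (1-based, `1 ≤ i ≤ k-1`) of `H_k(q)`; equal to `1` for
out-of-range indices. -/
noncomputable def heckeGen (F : Type) [Field F] (q : F) (k : ℕ) (i : ℕ) :
    HeckeA F q k :=
  if h : i - 1 < k - 1 then
    RingQuot.mkAlgHom F (heckeRel F q k) (FreeAlgebra.ι F ⟨i - 1, h⟩) else 1

/-- The full twist `Δ_j^2 = (g̃_{j−1} ⋯ g̃_1)^j` in `H_k(q)` (for `j ≤ k`). -/
noncomputable def heckeFullTwist (F : Type) [Field F] (q : F) (k j : ℕ) :
    HeckeA F q k :=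
  (((List.range (j - 1)).map (fun t => heckeGen F q k (j - 1 - t))).prod) ^ j

section Aux
variable (F : Type) [Field F] (q : F) (k : ℕ)

local notation "gg" => heckeGen F q k

lemma hk_gen_eq (i : ℕ) (h : i - 1 < k - 1) :
    gg i = RingQuot.mkAlgHom F (heckeRel F q k) (FreeAlgebra.ι F ⟨i - 1, h⟩) := by
  rw [heckeGen, dif_pos h]

lemma hk_gen_one (i : ℕ) (h : ¬ i - 1 < k - 1) : gg i = 1 := by
  rw [heckeGen, dif_neg h]

lemma hk_comm {i j : ℕ} (hi : 1 ≤ i) (hij : i + 2 ≤ j) :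
    gg i * gg j = gg j * gg i := by
  by_cases hj : j - 1 < k - 1
  · have hi' : i - 1 < k - 1 := by omega
    rw [hk_gen_eq F q k i hi', hk_gen_eq F q k j hj, ← map_mul, ← map_mul]
    exact RingQuot.mkAlgHom_rel F (heckeRel.comm ⟨i-1, hi'⟩ ⟨j-1, hj⟩ (by simp; omega))
  · rw [hk_gen_one F q k j hj, mul_one, one_mul]

lemma hk_braid {i : ℕ} (hi : 1 ≤ i) (hik : i + 1 ≤ k - 1) :
    gg i * gg (i+1) * gg i = gg (i+1) * gg i * gg (i+1) := by
  have h1 : i - 1 < k - 1 := by omega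
  have h2 : (i+1) - 1 < k - 1 := by omega
  rw [hk_gen_eq F q k i h1, hk_gen_eq F q k (i+1) h2, ← map_mul, ← map_mul, ← map_mul, ← map_mul]
  exact RingQuot.mkAlgHom_rel F (heckeRel.braid ⟨i-1, h1⟩ ⟨i, h2⟩ (by simp; omega))

lemma hk_quad {i : ℕ} (h : i - 1 < k - 1) :
    gg i * gg i = (q - 1) • gg i + q • (1 : HeckeA F q k) := by
  rw [hk_gen_eq F q k i h, ← map_mul]
  have := RingQuot.mkAlgHom_rel F (heckeRel.quad (q := q) ⟨i-1, h⟩)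
  rw [this, map_add, map_smul, map_smul, map_one]

lemma hk_mul_inv (hq : q ≠ 0) {i : ℕ} (h : i - 1 < k - 1) :
    gg i * (q⁻¹ • gg i + (q⁻¹ - 1) • 1) = 1 := by
  rw [mul_add, mul_smul_comm, mul_smul_comm, mul_one, hk_quad F q k h,
    smul_add, smul_smul, smul_smul]
  rw [show q⁻¹ * (q - 1) = 1 - q⁻¹ by field_simp, show q⁻¹ * q = 1 by field_simp]
  module

lemma hk_inv_mul (hq : q ≠ 0) {i : ℕ} (h : i - 1 < k - 1) :
    (q⁻¹ • gg i + (q⁻¹ - 1) • 1) * gg i = 1 := by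
  rw [add_mul, smul_mul_assoc, smul_mul_assoc, one_mul, hk_quad F q k h,
    smul_add, smul_smul, smul_smul]
  rw [show q⁻¹ * (q - 1) = 1 - q⁻¹ by field_simp, show q⁻¹ * q = 1 by field_simp]
  module

lemma hk_isUnit_gen (hq : q ≠ 0) (i : ℕ) : IsUnit (gg i) := by
  by_cases h : i - 1 < k - 1
  · exact ⟨⟨gg i, q⁻¹ • gg i + (q⁻¹ - 1) • 1, hk_mul_inv F q k hq h,
      hk_inv_mul F q k hq h⟩, rfl⟩
  · rw [hk_gen_one F q k i h]; exact isUnit_one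


end Aux

/-- `hkC n = g_n ⋯ g_1` (descending product). -/
noncomputable def hkC (F : Type) [Field F] (q : F) (k : ℕ) : ℕ → HeckeA F q k
  | 0 => 1
  | (n+1) => heckeGen F q k (n+1) * hkC F q k n

/-- `hkR n = g_1 ⋯ g_n` (ascending product). -/
noncomputable def hkR (F : Type) [Field F] (q : F) (k : ℕ) : ℕ → HeckeA F q k
  | 0 => 1
  | (n+1) => hkR F q k n * heckeGen F q k (n+1)

/-- `hkR2 m = g_2 ⋯ g_{m+1}` (shifted ascending product). -/
noncomputable def hkR2 (F : Type) [Field F] (q : F) (k : ℕ) : ℕ → HeckeA F q k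
  | 0 => 1
  | (m+1) => hkR2 F q k m * heckeGen F q k (m+2)

/-- `hkCup m = g_{m+1} ⋯ g_2` (shifted descending product). -/
noncomputable def hkCup (F : Type) [Field F] (q : F) (k : ℕ) : ℕ → HeckeA F q k
  | 0 => 1
  | (m+1) => heckeGen F q k (m+2) * hkCup F q k m

section Aux2
variable (F : Type) [Field F] (q : F) (k : ℕ)

local notation "gg" => heckeGen F q k
local notation "C" => hkC F q k
local notation "R" => hkR F q k
local notation "R2" => hkR2 F q k
local notation "Cup" => hkCup F q k

lemma hk_twist_eq (j : ℕ) : heckeFullTwist F q k j = C (j-1) ^ j := by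
  rw [heckeFullTwist]
  congr 1
  induction (j - 1) with
  | zero => simp [hkC]
  | succ m ih =>
      rw [List.range_succ_eq_map, List.map_cons, List.map_map, List.prod_cons]
      have : ((fun t => gg (m + 1 - t)) ∘ (· + 1)) = (fun t => gg (m - t)) := by
        funext t; simp [Function.comp, Nat.succ_sub_succ]
      rw [this, ih, hkC, Nat.sub_zero]

lemma hk_commC {j n : ℕ} (hj : n + 2 ≤ j) : gg j * C n = C n * gg j := by
  induction n with
  | zero => simp [hkC]
  | succ m ih =>
      rw [hkC, ← mul_assoc, ← hk_comm F q k (by omega) (by omega : (m+1) + 2 ≤ j),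
        mul_assoc, ih (by omega), mul_assoc]

lemma hk_commR {j n : ℕ} (hj : n + 2 ≤ j) : gg j * R n = R n * gg j := by
  induction n with
  | zero => simp [hkR]
  | succ m ih =>
      rw [hkR, ← mul_assoc, ih (by omega), mul_assoc,
        ← hk_comm F q k (by omega) (by omega : (m+1) + 2 ≤ j), ← mul_assoc]

lemma hk_sh1 {n i : ℕ} (hnk : n ≤ k - 1) (hi : 1 ≤ i) (hin : i + 1 ≤ n) :
    gg i * C n = C n * gg (i+1) := by
  induction n with
  | zero => omega
  | succ m ih =>
      rcases Nat.lt_or_ge (i+1) (m+1) with hlt | hge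
      · -- step case : i + 2 ≤ m + 1
        rw [hkC, ← mul_assoc, hk_comm F q k hi (by omega), mul_assoc,
          ih (by omega) (by omega), ← mul_assoc]
      · -- base: i = m
        have him : i = m := by omega
        subst him
        obtain ⟨p, rfl⟩ : ∃ p, i = p + 1 := ⟨i - 1, by omega⟩
        show gg (p+1) * ((gg (p+2)) * ((gg (p+1)) * C p)) =
          (gg (p+2) * (gg (p+1) * C p)) * gg (p+2)
        rw [← mul_assoc, ← mul_assoc,
          hk_braid F q k (by omega) (by omega : (p+1) + 1 ≤ k - 1)]
        rw [mul_assoc, mul_assoc, hk_commC F q k (by omega : p + 2 ≤ p + 2)]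
        simp only [mul_assoc]

lemma hk_shR {n i : ℕ} (hnk : n ≤ k - 1) (hi : 1 ≤ i) (hin : i + 1 ≤ n) :
    R n * gg i = gg (i+1) * R n := by
  induction n with
  | zero => omega
  | succ m ih =>
      rcases Nat.lt_or_ge (i+1) (m+1) with hlt | hge
      · rw [hkR, mul_assoc, ← hk_comm F q k hi (by omega), ← mul_assoc,
          ih (by omega) (by omega), mul_assoc]
      · have him : i = m := by omega
        subst him
        obtain ⟨p, rfl⟩ : ∃ p, i = p + 1 := ⟨i - 1, by omega⟩
        have hb : gg (p+1) * (gg (p+2) * gg (p+1))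
            = gg (p+2) * (gg (p+1) * gg (p+2)) := by
          rw [← mul_assoc, ← mul_assoc,
            hk_braid F q k (by omega) (by omega : (p+1) + 1 ≤ k - 1)]
        show ((R p * gg (p+1)) * gg (p+2)) * gg (p+1) =
          gg (p+2) * ((R p * gg (p+1)) * gg (p+2))
        rw [mul_assoc, mul_assoc, hb, ← mul_assoc,
          ← hk_commR F q k (by omega : p + 2 ≤ p + 2)]
        simp only [mul_assoc]

lemma hk_C_eq_Cup (m : ℕ) : C (m+1) = Cup m * gg 1 := by
  induction m with
  | zero => show gg 1 * 1 = 1 * gg 1; rw [one_mul, mul_one]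
  | succ p ih =>
      show gg (p+2) * C (p+1) = (gg (p+2) * Cup p) * gg 1
      rw [ih, mul_assoc]

lemma hk_shCm {n m : ℕ} (hnk : n + 1 ≤ k - 1) (hm : m ≤ n) :
    C m * C (n+1) = C (n+1) * Cup m := by
  induction m with
  | zero => simp [hkC, hkCup]
  | succ p ih =>
      show (gg (p+1) * C p) * C (n+1) = C (n+1) * (gg (p+2) * Cup p)
      rw [mul_assoc, ih (by omega),
        ← mul_assoc, hk_sh1 F q k hnk (by omega) (by omega : (p+1) + 1 ≤ n + 1),
        mul_assoc]

lemma hk_shRm {n m : ℕ} (hnk : n + 1 ≤ k - 1) (hm : m ≤ n) :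
    R m * C (n+1) = C (n+1) * R2 m := by
  induction m with
  | zero => simp [hkR, hkR2]
  | succ p ih =>
      show (R p * gg (p+1)) * C (n+1) = C (n+1) * (R2 p * gg (p+2))
      rw [mul_assoc, hk_sh1 F q k hnk (by omega) (by omega : (p+1) + 1 ≤ n + 1),
        ← mul_assoc, ih (by omega), mul_assoc]

lemma hk_R_eq_R2 (m : ℕ) : R (m+1) = gg 1 * R2 m := by
  induction m with
  | zero => show (1 : HeckeA F q k) * gg 1 = gg 1 * 1; rw [one_mul, mul_one]
  | succ p ih =>
      show R (p+1) * gg (p+2) = gg 1 * (R2 p * gg (p+2))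
      rw [ih, mul_assoc]

lemma hk_key {n : ℕ} (hnk : n + 1 ≤ k - 1) :
    C (n+1) * C (n+1) = C n * C (n+1) * gg 1 := by
  rw [hk_shCm F q k hnk (le_refl n), mul_assoc, ← hk_C_eq_Cup F q k n]

lemma hk_main {n : ℕ} (hnk : n + 1 ≤ k - 1) :
    ∀ m, m ≤ n + 1 → C (n+1) ^ (m+1) = C n ^ m * (C (n+1) * R m) := by
  intro m
  induction m with
  | zero => intro _; simp [hkR]
  | succ p ih =>
      intro hp
      rw [pow_succ, ih (by omega), mul_assoc, mul_assoc,
        hk_shRm F q k hnk (by omega), ← mul_assoc (hkC F q k (n+1)),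
        hk_key F q k hnk, hk_R_eq_R2 F q k p, pow_succ]
      simp only [mul_assoc]

lemma hk_twist_succ {n : ℕ} (hnk : n + 1 ≤ k - 1) :
    heckeFullTwist F q k (n+2) = heckeFullTwist F q k (n+1) * (C (n+1) * R (n+1)) := by
  rw [hk_twist_eq, hk_twist_eq]
  simpa using hk_main F q k hnk (n+1) (le_refl _)

end Aux2

section Aux3
variable (F : Type) [Field F] (q : F) (k : ℕ)

local notation "gg" => heckeGen F q k
local notation "C" => hkC F q k
local notation "R" => hkR F q k

lemma hk_isUnit_C (hq : q ≠ 0) (n : ℕ) : IsUnit (C n) := by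
  induction n with
  | zero => exact isUnit_one
  | succ m ih => exact (hk_isUnit_gen F q k hq (m+1)).mul ih

lemma hk_isUnit_R (hq : q ≠ 0) (n : ℕ) : IsUnit (R n) := by
  induction n with
  | zero => exact isUnit_one
  | succ m ih => exact ih.mul (hk_isUnit_gen F q k hq (m+1))

lemma hk_isUnit_twist (hq : q ≠ 0) (j : ℕ) : IsUnit (heckeFullTwist F q k j) := by
  rw [hk_twist_eq]
  exact (hk_isUnit_C F q k hq (j-1)).pow j

lemma hk_Lcomm {n i : ℕ} (hnk : n ≤ k - 1) (hi : 1 ≤ i) (hin : i + 1 ≤ n) :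
    gg i * (C n * R n) = (C n * R n) * gg i := by
  rw [← mul_assoc, hk_sh1 F q k hnk hi hin, mul_assoc,
    ← hk_shR F q k hnk hi hin, ← mul_assoc]

lemma hk_commLgen {n j : ℕ} (hj : n + 2 ≤ j) :
    gg j * (C n * R n) = (C n * R n) * gg j := by
  rw [← mul_assoc, hk_commC F q k hj, mul_assoc, hk_commR F q k hj, ← mul_assoc]

lemma hk_C_comm_of (x : HeckeA F q k) (n : ℕ)
    (h : ∀ t, 1 ≤ t → t ≤ n → gg t * x = x * gg t) : C n * x = x * C n := by
  induction n with
  | zero => simp [hkC]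
  | succ m ih =>
      show (gg (m+1) * C m) * x = x * (gg (m+1) * C m)
      rw [mul_assoc, ih (fun t ht1 ht2 => h t ht1 (by omega)), ← mul_assoc,
        h (m+1) (by omega) (le_refl _), mul_assoc]

lemma hk_R_comm_of (x : HeckeA F q k) (n : ℕ)
    (h : ∀ t, 1 ≤ t → t ≤ n → gg t * x = x * gg t) : R n * x = x * R n := by
  induction n with
  | zero => simp [hkR]
  | succ m ih =>
      show (R m * gg (m+1)) * x = x * (R m * gg (m+1))
      rw [mul_assoc, h (m+1) (by omega) (le_refl _), ← mul_assoc,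
        ih (fun t ht1 ht2 => h t ht1 (by omega)), mul_assoc]

lemma hk_LL {f : ℕ} (hf1k : f + 1 ≤ k - 1) :
    (C f * R f) * (C (f+1) * R (f+1)) = (C (f+1) * R (f+1)) * (C f * R f) := by
  have h : ∀ t, 1 ≤ t → t ≤ f → gg t * (C (f+1) * R (f+1)) = (C (f+1) * R (f+1)) * gg t :=
    fun t ht1 ht2 => hk_Lcomm F q k hf1k ht1 (by omega)
  rw [mul_assoc, hk_R_comm_of F q k _ f h, ← mul_assoc,
    hk_C_comm_of F q k _ f h, mul_assoc]

end Aux3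

/-- Let `F` be a field, `q ∈ F` invertible, and `H_k(q)` the Hecke
algebra of type `A_{k−1}` over `F`. For `f ≥ 1` and `k ≥ f + 2`: each generator
`g̃_i` is invertible in `H_k(q)` with inverse `q⁻¹ g̃_i + (q⁻¹ − 1)·1`; hence
`T := Δ_f^{−2} Δ_{f+1}^2` is a well-defined invertible element of `H_k(q)`, and `T`
satisfies the defining relations of the type-`B` generator:
`T g̃_{f+1} T g̃_{f+1} = g̃_{f+1} T g̃_{f+1} T` and `T g̃_{f+i} = g̃_{f+i} T` for
`2 ≤ i ≤ k − f − 1`. -/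
theorem hecke_typeB_generator (F : Type) [Field F] (q : F) (hq : q ≠ 0)
    (k f : ℕ) (hf : 1 ≤ f) (hk : f + 2 ≤ k) :
    (∀ i : ℕ, 1 ≤ i → i ≤ k - 1 →
      heckeGen F q k i * (q⁻¹ • heckeGen F q k i + (q⁻¹ - 1) • 1) = 1 ∧
      (q⁻¹ • heckeGen F q k i + (q⁻¹ - 1) • 1) * heckeGen F q k i = 1) ∧
    ∃ Dfinv : HeckeA F q k,
      heckeFullTwist F q k f * Dfinv = 1 ∧ Dfinv * heckeFullTwist F q k f = 1 ∧
      IsUnit (Dfinv * heckeFullTwist F q k (f + 1)) ∧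
      (Dfinv * heckeFullTwist F q k (f + 1)) * heckeGen F q k (f + 1) *
          (Dfinv * heckeFullTwist F q k (f + 1)) * heckeGen F q k (f + 1) =
        heckeGen F q k (f + 1) * (Dfinv * heckeFullTwist F q k (f + 1)) *
          heckeGen F q k (f + 1) * (Dfinv * heckeFullTwist F q k (f + 1)) ∧
      ∀ i : ℕ, 2 ≤ i → i ≤ k - f - 1 →
        (Dfinv * heckeFullTwist F q k (f + 1)) * heckeGen F q k (f + i) =
          heckeGen F q k (f + i) * (Dfinv * heckeFullTwist F q k (f + 1)) := by
  constructor
  · intro i hi1 hik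
    have h : i - 1 < k - 1 := by omega
    exact ⟨hk_mul_inv F q k hq h, hk_inv_mul F q k hq h⟩
  · obtain ⟨e, rfl⟩ : ∃ e, f = e + 1 := ⟨f - 1, by omega⟩
    obtain ⟨u, hu⟩ := hk_isUnit_twist F q k hq (e+1)
    have hT : (↑u⁻¹ : HeckeA F q k) * heckeFullTwist F q k (e + 1 + 1) =
        hkC F q k (e+1) * hkR F q k (e+1) := by
      rw [show e + 1 + 1 = e + 2 from rfl, hk_twist_succ F q k (by omega : e + 1 ≤ k - 1),
        ← mul_assoc, ← hu, Units.inv_mul, one_mul]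
    refine ⟨↑u⁻¹, ?_, ?_, ?_, ?_, ?_⟩
    · rw [← hu, Units.mul_inv_eq_one]
    · rw [← hu, Units.inv_mul_eq_one]
    · rw [hT]
      exact (hk_isUnit_C F q k hq (e+1)).mul (hk_isUnit_R F q k hq (e+1))
    · rw [hT]
      have hgLg : heckeGen F q k (e+1+1) * (hkC F q k (e+1) * hkR F q k (e+1)) *
          heckeGen F q k (e+1+1) = hkC F q k (e+2) * hkR F q k (e+2) := by
        show _ = (heckeGen F q k (e+2) * hkC F q k (e+1)) *
          (hkR F q k (e+1) * heckeGen F q k (e+2))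
        simp only [mul_assoc]
      have hm : (hkC F q k (e+1) * hkR F q k (e+1)) *
            (heckeGen F q k (e+1+1) * (hkC F q k (e+1) * hkR F q k (e+1)) *
              heckeGen F q k (e+1+1)) =
          (heckeGen F q k (e+1+1) * (hkC F q k (e+1) * hkR F q k (e+1)) *
            heckeGen F q k (e+1+1)) * (hkC F q k (e+1) * hkR F q k (e+1)) := by
        rw [hgLg]
        exact hk_LL F q k (by omega : (e+1) + 1 ≤ k - 1)
      simpa only [mul_assoc] using hm
    · intro i hi2 hik
      rw [hT]
      exact (hk_commLgen F q k (by omega : (e+1) + 2 ≤ e + 1 + i)).symm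
end
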